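/- arXiv:2510.13228 — 8 statements merged into one kernel-verified Lean document; each statement's English description precedes it below -/
import Mathlib

section
/- For the secant iteration applied to f(x) = x², namely x_{n+1} = x_n - x_n²/(x_n + x_{n-1}), the ratio k_n = x_{n+1}/x_n satisfies the recurrence k_n = 1 - k_{n-1}/(k_{n-1} + 1). Moreover, k* = -(1+√5)/2 is a fixed point of this recurrence, and if the initial values satisfy x_1/x_0 = k*, then x_n = (k*)^n · x_0 for all n, so the sequence {x_n} diverges (|x_n| → ∞) whenever x_0 ≠ 0. -/
open Filter Topology

/-!
Writing `k = x₁ / x₀`, the secant step for `x²` maps `(x₀, k x₀)` to `(k x₀, k² x₀)` exactly when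
`k² + k = 1`, i.e. `k(k + 1) = 1`, which is also the fixed-point equation of the ratio recurrence.
The root `k = -φ` of this equation has modulus `φ > 1`, so the iterates form a geometric sequence
whose modulus blows up.
-/

section Secant

variable {K : Type*} [Field K]

theorem secant_sq_ratio {a b : K} (ha : a ≠ 0) (hb : b ≠ 0) :
    (a - a ^ 2 / (a + b)) / a = 1 - a / b / (a / b + 1) := by
  have hsum : a / b + 1 = (a + b) / b := by field_simp
  rw [hsum, div_div_div_cancel_right₀ hb, sub_div, sq, mul_div_assoc, mul_div_cancel_left₀ _ ha,
    div_self ha]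

theorem add_one_ne_zero_of_sq_add_self_eq_one {k : K} (hk : k ^ 2 + k = 1) : k + 1 ≠ 0 := by
  rintro h
  simp [show k ^ 2 + k = k * (k + 1) by ring, h] at hk

theorem one_sub_div_add_one_eq_self_of_sq_add_self_eq_one {k : K} (hk : k ^ 2 + k = 1) :
    1 - k / (k + 1) = k := by
  have hk1 := add_one_ne_zero_of_sq_add_self_eq_one hk
  field_simp
  linear_combination -hk

theorem secant_sq_step_geometric {k : K} (hk : k ^ 2 + k = 1) (a : K) :
    k * a - (k * a) ^ 2 / (k * a + a) = k ^ 2 * a := by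
  have hk1 := add_one_ne_zero_of_sq_add_self_eq_one hk
  rcases eq_or_ne a 0 with rfl | ha
  · simp
  have hquot : (k * a) ^ 2 / (k * a + a) = k * a - k ^ 2 * a := by
    rw [div_eq_iff (by rw [← add_one_mul]; exact mul_ne_zero hk1 ha)]
    linear_combination k * a ^ 2 * hk
  rw [hquot]
  ring

theorem secant_sq_eq_geometric {x : ℕ → K} {k : K} (hk : k ^ 2 + k = 1)
    (hrec : ∀ n, x (n + 2) = x (n + 1) - x (n + 1) ^ 2 / (x (n + 1) + x n))
    (h1 : x 1 = k * x 0) (n : ℕ) : x n = k ^ n * x 0 := by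
  suffices h : x n = k ^ n * x 0 ∧ x (n + 1) = k ^ (n + 1) * x 0 from h.1
  induction n with
  | zero => simpa using h1
  | succ m ih =>
    refine ⟨ih.2, ?_⟩
    rw [hrec, ih.1, ih.2, pow_succ', mul_assoc, secant_sq_step_geometric hk]
    ring

end Secant

theorem tendsto_abs_pow_mul_atTop {k c : ℝ} (hk : 1 < |k|) (hc : c ≠ 0) :
    Tendsto (fun n : ℕ => |k ^ n * c|) atTop atTop := by
  simp only [abs_mul, abs_pow]
  exact (tendsto_pow_atTop_atTop_of_one_lt hk).atTop_mul_const (abs_pos.mpr hc)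

theorem neg_goldenRatio_sq_add_self : (-Real.goldenRatio) ^ 2 + -Real.goldenRatio = 1 := by
  rw [neg_sq, Real.goldenRatio_sq]
  ring

theorem secant_xsq_divergence_general (x : ℕ → ℝ)
    (hx0 : ∀ n, x n ≠ 0)
    (hrec : ∀ n, x (n + 2) = x (n + 1) - (x (n + 1)) ^ 2 / (x (n + 1) + x n)) :
    (∀ n, x (n + 2) / x (n + 1) =
      1 - (x (n + 1) / x n) / ((x (n + 1) / x n) + 1)) ∧
    (1 - (-(1 + Real.sqrt 5) / 2) / ((-(1 + Real.sqrt 5) / 2) + 1)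
      = -(1 + Real.sqrt 5) / 2) ∧
    (x 1 / x 0 = -(1 + Real.sqrt 5) / 2 →
      (∀ n, x n = (-(1 + Real.sqrt 5) / 2) ^ n * x 0) ∧
      Tendsto (fun n => |x n|) atTop atTop) := by
  have hk : -(1 + Real.sqrt 5) / 2 = -Real.goldenRatio := neg_div _ _
  rw [hk]
  refine ⟨fun n => by rw [hrec, secant_sq_ratio (hx0 _) (hx0 _)],
    one_sub_div_add_one_eq_self_of_sq_add_self_eq_one neg_goldenRatio_sq_add_self, fun hinit => ?_⟩
  have hform := secant_sq_eq_geometric neg_goldenRatio_sq_add_self hrec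
    ((div_eq_iff (hx0 0)).mp hinit)
  refine ⟨hform, ?_⟩
  have habs : 1 < |-Real.goldenRatio| := by
    rw [abs_neg, abs_of_pos Real.goldenRatio_pos]
    exact Real.one_lt_goldenRatio
  exact (tendsto_abs_pow_mul_atTop habs (hx0 0)).congr fun n => by rw [hform n]

theorem secant_xsq_divergence (x : ℕ → ℝ)
    (hx0 : ∀ n, x n ≠ 0)
    (hxsum : ∀ n, x (n + 1) + x n ≠ 0)
    (hrec : ∀ n, x (n + 2) = x (n + 1) - (x (n + 1)) ^ 2 / (x (n + 1) + x n)) :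
    (∀ n, x (n + 2) / x (n + 1) =
      1 - (x (n + 1) / x n) / ((x (n + 1) / x n) + 1)) ∧
    (1 - (-(1 + Real.sqrt 5) / 2) / ((-(1 + Real.sqrt 5) / 2) + 1)
      = -(1 + Real.sqrt 5) / 2) ∧
    (x 1 / x 0 = -(1 + Real.sqrt 5) / 2 →
      (∀ n, x n = (-(1 + Real.sqrt 5) / 2) ^ n * x 0) ∧
      Tendsto (fun n => |x n|) atTop atTop) :=
  secant_xsq_divergence_general x hx0 hrec
end

section
/- Let f be C² on an interval containing α with f(α) = 0, and let x_{n−1} ≠ x_n be points in the interval both different from α. Then the secant iterate x_{n+1} = x_n − f(x_n)(x_n − x_{n−1})/(f(x_n) − f(x_{n−1})) satisfies x_{n+1} − α = (x_n − α)(x_{n−1} − α) · f''(ζ)/(2 f'(ξ)) for some ξ strictly between x_{n−1} and x_n, and some ζ in the closed interval spanned by x_{n−1}, x_n, α, provided f(x_{n−1}) ≠ f(x_n). -/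
open Set

/-!
With `f α = 0`, the secant step satisfies, by pure algebra,
`x_{n+1} - α = (x_n - α) (x_{n-1} - α) f[x_{n-1}, x_n, α] / f[x_{n-1}, x_n]`.
The mean value theorem gives `f[x_{n-1}, x_n] = f'(ξ)`. For the second divided difference,
`f` minus its quadratic Newton interpolant at the three nodes has three zeros, so by Rolle's
theorem applied twice its second derivative vanishes somewhere, i.e.
`f[x_{n-1}, x_n, α] = f''(ζ) / 2`.
Divided differences are Mathlib's iterated `slope`: `f[x, y, z] = slope (slope f x) y z`.
-/

theorem exists_iteratedDeriv_two_eq_zero_of_lt {g : ℝ → ℝ} {u v w : ℝ} (huv : u < v) (hvw : v < w)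
    (hg : ContDiffOn ℝ 2 g (Icc u w)) (hu : g u = 0) (hv : g v = 0) (hw : g w = 0) :
    ∃ ζ ∈ Ioo u w, iteratedDeriv 2 g ζ = 0 := by
  obtain ⟨p, hp, hp0⟩ := exists_deriv_eq_zero huv
    (hg.continuousOn.mono (Icc_subset_Icc_right hvw.le)) (hu.trans hv.symm)
  obtain ⟨q, hq, hq0⟩ := exists_deriv_eq_zero hvw
    (hg.continuousOn.mono (Icc_subset_Icc_left huv.le)) (hv.trans hw.symm)
  have hpq : Icc p q ⊆ Ioo u w := Icc_subset_Ioo hp.1 hq.2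
  have hg' : ContinuousOn (deriv g) (Icc p q) :=
    ((hg.mono Ioo_subset_Icc_self).continuousOn_deriv_of_isOpen isOpen_Ioo one_le_two).mono hpq
  obtain ⟨ζ, hζ, hζ0⟩ := exists_deriv_eq_zero (hp.2.trans hq.1) hg' (hp0.trans hq0.symm)
  exact ⟨ζ, hpq (Ioo_subset_Icc_self hζ), by rwa [iteratedDeriv_succ, iteratedDeriv_one]⟩

theorem exists_iteratedDeriv_two_eq_zero {g : ℝ → ℝ} {x y z : ℝ}
    (hxy : x ≠ y) (hyz : y ≠ z) (hxz : x ≠ z)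
    (hg : ContDiffOn ℝ 2 g (Icc (min x (min y z)) (max x (max y z))))
    (hx : g x = 0) (hy : g y = 0) (hz : g z = 0) :
    ∃ ζ ∈ Ioo (min x (min y z)) (max x (max y z)), iteratedDeriv 2 g ζ = 0 := by
  have of_lt : ∀ u v w, min x (min y z) ≤ u → w ≤ max x (max y z) → u < v → v < w →
      g u = 0 → g v = 0 → g w = 0 →
      ∃ ζ ∈ Ioo (min x (min y z)) (max x (max y z)), iteratedDeriv 2 g ζ = 0 := by
    intro u v w hu hw huv hvw hgu hgv hgw
    obtain ⟨ζ, hζ, h⟩ := exists_iteratedDeriv_two_eq_zero_of_lt huv hvw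
      (hg.mono (Icc_subset_Icc hu hw)) hgu hgv hgw
    exact ⟨ζ, Ioo_subset_Ioo hu hw hζ, h⟩
  rcases hxy.lt_or_gt with h₁ | h₁ <;> rcases hyz.lt_or_gt with h₂ | h₂ <;>
    rcases hxz.lt_or_gt with h₃ | h₃
  all_goals first
    | exact of_lt x y z (by simp) (by simp) ‹_› ‹_› hx hy hz
    | exact of_lt x z y (by simp) (by simp) ‹_› ‹_› hx hz hy
    | exact of_lt y x z (by simp) (by simp) ‹_› ‹_› hy hx hz
    | exact of_lt y z x (by simp) (by simp) ‹_› ‹_› hy hz hx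
    | exact of_lt z x y (by simp) (by simp) ‹_› ‹_› hz hx hy
    | exact of_lt z y x (by simp) (by simp) ‹_› ‹_› hz hy hx

theorem iteratedDeriv_two_newton_quadratic (a b c x y t : ℝ) :
    iteratedDeriv 2 (fun t => a + b * (t - x) + c * ((t - x) * (t - y))) t = 2 * c := by
  have hderiv : deriv (fun t => a + b * (t - x) + c * ((t - x) * (t - y))) =
      fun t => b + c * ((t - y) + (t - x)) := by
    ext t
    have := ((((hasDerivAt_id t).sub_const x).const_mul b).const_add a).fun_add
      (((hasDerivAt_id t).sub_const x).fun_mul ((hasDerivAt_id t).sub_const y) |>.const_mul c)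
    simpa using this.deriv
  rw [iteratedDeriv_succ, iteratedDeriv_one, hderiv]
  have := ((((hasDerivAt_id t).sub_const y).fun_add
    ((hasDerivAt_id t).sub_const x)).const_mul c).const_add b
  simpa [two_mul, mul_add] using this.deriv

theorem exists_iteratedDeriv_two_eq_two_mul_slope_slope {f : ℝ → ℝ} {x y z : ℝ}
    (hxy : x ≠ y) (hyz : y ≠ z) (hxz : x ≠ z)
    (hf : ContDiffOn ℝ 2 f (Icc (min x (min y z)) (max x (max y z)))) :
    ∃ ζ ∈ Ioo (min x (min y z)) (max x (max y z)),
      iteratedDeriv 2 f ζ = 2 * slope (slope f x) y z := by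
  set c := slope (slope f x) y z
  set q : ℝ → ℝ := fun t => f x + slope f x y * (t - x) + c * ((t - x) * (t - y))
  have hyx : y - x ≠ 0 := sub_ne_zero.2 hxy.symm
  have hzx : z - x ≠ 0 := sub_ne_zero.2 hxz.symm
  have hzy : z - y ≠ 0 := sub_ne_zero.2 hyz.symm
  have hq_contDiff : ContDiff ℝ 2 q := by fun_prop
  obtain ⟨ζ, hζ, hζ0⟩ := exists_iteratedDeriv_two_eq_zero (g := f - q) hxy hyz hxz
    (hf.sub hq_contDiff.contDiffOn)
    (by simp [q]) (by simp only [Pi.sub_apply, q, c, slope_def_field]; field_simp; ring)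
    (by simp only [Pi.sub_apply, q, c, slope_def_field]; field_simp; ring)
  refine ⟨ζ, hζ, ?_⟩
  rwa [iteratedDeriv_sub (hf.contDiffAt (Icc_mem_nhds hζ.1 hζ.2)) hq_contDiff.contDiffAt,
    iteratedDeriv_two_newton_quadratic, sub_eq_zero] at hζ0

theorem exists_mem_uIoo_deriv_eq_slope {f : ℝ → ℝ} {x y : ℝ} (hxy : x ≠ y)
    (hfc : ContinuousOn f (uIcc x y)) (hfd : DifferentiableOn ℝ f (uIoo x y)) :
    ∃ ξ ∈ uIoo x y, deriv f ξ = slope f x y := by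
  wlog h : x < y generalizing x y
  · obtain ⟨ξ, hξ, hξ'⟩ := this hxy.symm (uIcc_comm x y ▸ hfc) (uIoo_comm x y ▸ hfd)
      (hxy.lt_or_gt.resolve_left h)
    exact ⟨ξ, uIoo_comm x y ▸ hξ, hξ'.trans (slope_comm f y x)⟩
  rw [uIcc_of_lt h] at hfc
  rw [uIoo_of_lt h] at hfd ⊢
  simpa only [slope_def_field] using exists_deriv_eq_slope f h hfc hfd

theorem secant_step_sub_eq_mul_slope_slope_div_slope {f : ℝ → ℝ} {α x y : ℝ} (hroot : f α = 0)
    (hxy : x ≠ y) (hxα : x ≠ α) (hyα : y ≠ α) (hfxy : f x ≠ f y) :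
    (y - f y * (y - x) / (f y - f x)) - α =
      (y - α) * (x - α) * (slope (slope f x) y α / slope f x y) := by
  have hyx : y - x ≠ 0 := sub_ne_zero.2 hxy.symm
  have hfyx : f y - f x ≠ 0 := sub_ne_zero.2 hfxy.symm
  have hαx : α - x ≠ 0 := sub_ne_zero.2 hxα.symm
  have hαy : α - y ≠ 0 := sub_ne_zero.2 hyα.symm
  simp only [slope_def_field, hroot]
  field_simp
  ring

theorem secant_error_relation (f : ℝ → ℝ) (a b α x y : ℝ)
    (hf : ContDiffOn ℝ 2 f (Set.Icc a b))
    (hα : α ∈ Set.Icc a b) (hx : x ∈ Set.Icc a b) (hy : y ∈ Set.Icc a b)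
    (hroot : f α = 0) (hxy : x ≠ y) (hxα : x ≠ α) (hyα : y ≠ α)
    (hfxy : f x ≠ f y) :
    ∃ ξ ∈ Set.Ioo (min x y) (max x y),
      ∃ ζ ∈ Set.Icc (min x (min y α)) (max x (max y α)),
        deriv f ξ ≠ 0 ∧
        (y - f y * (y - x) / (f y - f x)) - α =
          (y - α) * (x - α) * (iteratedDeriv 2 f ζ / (2 * deriv f ξ)) := by
  have hxy_sub : uIcc x y ⊆ Icc a b := uIcc_subset_Icc hx hy
  have hxyα_sub : Icc (min x (min y α)) (max x (max y α)) ⊆ Icc a b :=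
    Icc_subset_Icc (le_min hx.1 (le_min hy.1 hα.1)) (max_le hx.2 (max_le hy.2 hα.2))
  obtain ⟨ξ, hξ, hξ_slope⟩ := exists_mem_uIoo_deriv_eq_slope hxy (hf.continuousOn.mono hxy_sub)
    ((hf.differentiableOn two_ne_zero).mono (Ioo_subset_Icc_self.trans hxy_sub))
  obtain ⟨ζ, hζ, hζ_slope⟩ :=
    exists_iteratedDeriv_two_eq_two_mul_slope_slope hxy hyα hxα (hf.mono hxyα_sub)
  refine ⟨ξ, hξ, ζ, Ioo_subset_Icc_self hζ, ?_, ?_⟩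
  · rw [hξ_slope]
    exact mt slope_eq_zero_iff.1 hfxy
  · rw [secant_step_sub_eq_mul_slope_slope_div_slope hroot hxy hxα hyα hfxy, hξ_slope, hζ_slope,
      mul_div_mul_left _ _ two_ne_zero]
end

section
/- Let f be C² on B = [α−δ, α+δ] with f(α) = 0, f'(α) ≠ 0, and f''(α) ≠ 0. If x_0 ≠ x_1 are chosen sufficiently close to α (and no iterate equals α), then the secant iterates x_{n+1} = x_n − f(x_n)(x_n − x_{n−1})/(f(x_n) − f(x_{n−1})) are well-defined, remain close to α, and converge to α; moreover with E_n = |x_n − α|, one has lim_{n→∞} E_{n+1}/E_n^{r₀} = m_α^{r₀−1}, where r₀ = (1+√5)/2 and m_α = |f''(α)/(2f'(α))|. -/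
/-!
With `e n = x n - α`, the divided-difference form of the mean value theorem gives the error
recurrence `e (n + 2) = e (n + 1) * e n * f'' η / (2 f' ξ)`, with `ξ, η` between the iterates
and `α`.
Near a simple root the factor is bounded, so the errors at least halve and the iterates converge;
then `ξ, η → α` and the factor tends to `m = |f'' α / (2 f' α)|`. Taking logarithms,
`u n = log |e (n + 1)| - φ log |e n| - (φ - 1) log m` satisfies `u (n + 1) = ψ u n + o(1)` with
`|ψ| < 1`, because `φ` and `ψ` are the roots of `t² = t + 1`; hence `u n → 0`.
-/

open Filter Topology Set Metric Real goldenRatio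

theorem tendsto_zero_of_eq_add_mul {u a : ℕ → ℝ} {r : ℝ} (hr : |r| < 1)
    (ha : Tendsto a atTop (𝓝 0)) (hu : ∀ n, u (n + 1) = a n + r * u n) :
    Tendsto u atTop (𝓝 0) := by
  rw [Metric.tendsto_atTop]
  intro ε hε
  have hr' : 0 < 1 - |r| := by linarith
  obtain ⟨N, hN⟩ := Metric.tendsto_atTop.1 ha (ε / 2 * (1 - |r|)) (by positivity)
  -- `|u n| - ε / 2` contracts by the factor `|r|` from `N` on
  have hgeom : ∀ k, |u (N + k)| - ε / 2 ≤ |r| ^ k * (|u N| - ε / 2) := fun k =>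
    le_geom (u := fun k => |u (N + k)| - ε / 2) (abs_nonneg r) k fun j _ => by
      have haj : |a (N + j)| < ε / 2 * (1 - |r|) := by
        simpa [Real.dist_eq] using hN (N + j) (by omega)
      have : |u (N + j + 1)| ≤ |a (N + j)| + |r| * |u (N + j)| := by
        rw [hu, ← abs_mul]; exact abs_add_le _ _
      simp only [← add_assoc]
      nlinarith
  have hpow : Tendsto (fun k => |r| ^ k * (|u N| - ε / 2)) atTop (𝓝 0) := by
    simpa using (tendsto_pow_atTop_nhds_zero_of_lt_one (abs_nonneg r) hr).mul_const _
  obtain ⟨K, hK⟩ := Metric.tendsto_atTop.1 hpow (ε / 2) (by positivity)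
  refine ⟨N + K, fun n hn => ?_⟩
  obtain ⟨k, rfl⟩ := Nat.exists_eq_add_of_le hn
  have h1 := hgeom (K + k)
  have h2 := (le_abs_self _).trans_lt
    (by simpa only [Real.dist_eq, sub_zero] using hK (K + k) (by omega))
  rw [← add_assoc] at h1
  rw [Real.dist_eq, sub_zero]
  linarith

theorem tendsto_div_rpow_goldenRatio {E c : ℕ → ℝ} {m : ℝ} (hE : ∀ n, 0 < E n)
    (hrec : ∀ n, E (n + 2) = E (n + 1) * E n * c n) (hc : Tendsto c atTop (𝓝 m))
    (hm : 0 < m) :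
    Tendsto (fun n => E (n + 1) / E n ^ φ) atTop (𝓝 (m ^ (φ - 1))) := by
  have hc_pos : ∀ n, 0 < c n := fun n => by
    have := hE (n + 2)
    rw [hrec] at this
    exact pos_of_mul_pos_right this (mul_pos (hE _) (hE _)).le
  set u : ℕ → ℝ := fun n => log (E (n + 1)) - φ * log (E n) - (φ - 1) * log m
  have hu : ∀ n, u (n + 1) = (log (c n) - log m) + ψ * u n := fun n => by
    have hlog : log (E (n + 2)) = log (E (n + 1)) + log (E n) + log (c n) := by
      rw [hrec, log_mul (mul_pos (hE _) (hE _)).ne' (hc_pos n).ne',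
        log_mul (hE _).ne' (hE _).ne']
    simp only [u]
    -- `ring` unfolds `φ = (1 + √5) / 2`, so `φ ^ 2 = φ + 1` enters as `√5 ^ 2 = 5`
    linear_combination hlog - (log (E n) + log m) / 4 * sq_sqrt (show (0 : ℝ) ≤ 5 by norm_num)
  have hψ : |ψ| < 1 := abs_lt.2 ⟨neg_one_lt_goldenConj, goldenConj_neg.trans one_pos⟩
  have hu0 : Tendsto u atTop (𝓝 0) := by
    refine tendsto_zero_of_eq_add_mul hψ ?_ hu
    simpa using ((continuousAt_log hm.ne').tendsto.comp hc).sub_const (log m)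
  have hform : ∀ n, E (n + 1) / E n ^ φ = exp (u n) * m ^ (φ - 1) := fun n => by
    rw [rpow_def_of_pos (hE n), rpow_def_of_pos hm, ← exp_add, ← exp_log (hE (n + 1)),
      ← exp_sub]
    congr 1
    ring
  simp only [hform]
  simpa using ((continuous_exp.tendsto 0).comp hu0).mul_const (m ^ (φ - 1))

noncomputable def secondDivDiff (f : ℝ → ℝ) (a b c : ℝ) : ℝ :=
  f a / ((a - b) * (a - c)) + f b / ((b - a) * (b - c)) + f c / ((c - a) * (c - b))

section MeanValue

variable {f f' f'' : ℝ → ℝ}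

theorem exists_eq_two_mul_secondDivDiff_of_lt {a b c : ℝ} (hab : a < b) (hbc : b < c)
    (hf : ∀ t ∈ Icc a c, HasDerivAt f (f' t) t)
    (hf' : ∀ t ∈ Icc a c, HasDerivAt f' (f'' t) t) :
    ∃ η ∈ Ioo a c, f'' η = 2 * secondDivDiff f a b c := by
  set D := secondDivDiff f a b c
  set S := (f b - f a) / (b - a)
  -- `g` vanishes at `a`, `b`, `c`, so Rolle's theorem applies twice
  set g : ℝ → ℝ := fun t => f t - f a - S * (t - a) - D * ((t - a) * (t - b))
  set g' : ℝ → ℝ := fun t => f' t - S - D * ((t - b) + (t - a))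
  have hg : ∀ t ∈ Icc a c, HasDerivAt g (g' t) t := fun t ht => by
    have := (((hf t ht).sub_const (f a)).sub (((hasDerivAt_id t).sub_const a).const_mul S)).sub
      ((((hasDerivAt_id t).sub_const a).mul ((hasDerivAt_id t).sub_const b)).const_mul D)
    exact this.congr_deriv (by simp only [id]; ring)
  have hg' : ∀ t ∈ Icc a c, HasDerivAt g' (f'' t - 2 * D) t := fun t ht => by
    have := ((hf' t ht).sub_const S).sub
      ((((hasDerivAt_id t).sub_const b).add ((hasDerivAt_id t).sub_const a)).const_mul D)
    exact this.congr_deriv (by ring)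
  have hba : b - a ≠ 0 := sub_ne_zero.2 hab.ne'
  have hca : c - a ≠ 0 := sub_ne_zero.2 (hab.trans hbc).ne'
  have hcb : c - b ≠ 0 := sub_ne_zero.2 hbc.ne'
  have hab' : a - b ≠ 0 := sub_ne_zero.2 hab.ne
  have hac : a - c ≠ 0 := sub_ne_zero.2 (hab.trans hbc).ne
  have hbc' : b - c ≠ 0 := sub_ne_zero.2 hbc.ne
  have hga : g a = 0 := by simp only [g]; ring
  have hgb : g b = 0 := by simp only [g, S]; field_simp; ring
  have hgc : g c = 0 := by simp only [g, S, D, secondDivDiff]; field_simp; ring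
  have rolle : ∀ {u v : ℝ} {h h' : ℝ → ℝ}, u < v → Icc u v ⊆ Icc a c →
      (∀ t ∈ Icc a c, HasDerivAt h (h' t) t) → h u = h v → ∃ z ∈ Ioo u v, h' z = 0 :=
    fun huv hsub hh heq => exists_hasDerivAt_eq_zero huv
      (fun t ht => (hh t (hsub ht)).continuousAt.continuousWithinAt) heq
      (fun t ht => hh t (hsub (Ioo_subset_Icc_self ht)))
  obtain ⟨z₁, hz₁, hgz₁⟩ :=
    rolle hab (Icc_subset_Icc_right hbc.le) hg (hga.trans hgb.symm)
  obtain ⟨z₂, hz₂, hgz₂⟩ :=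
    rolle hbc (Icc_subset_Icc_left hab.le) hg (hgb.trans hgc.symm)
  obtain ⟨η, hη, hg'η⟩ :=
    rolle (hz₁.2.trans hz₂.1) (Icc_subset_Icc hz₁.1.le hz₂.2.le) hg' (hgz₁.trans hgz₂.symm)
  exact ⟨η, ⟨hz₁.1.trans hη.1, hη.2.trans hz₂.2⟩, by linarith⟩

theorem exists_eq_two_mul_secondDivDiff {s : Set ℝ} (hs : s.OrdConnected) {p q r : ℝ}
    (hp : p ∈ s) (hq : q ∈ s) (hr : r ∈ s) (hpq : p ≠ q) (hpr : p ≠ r) (hqr : q ≠ r)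
    (hf : ∀ t ∈ s, HasDerivAt f (f' t) t) (hf' : ∀ t ∈ s, HasDerivAt f' (f'' t) t) :
    ∃ η ∈ s, f'' η = 2 * secondDivDiff f p q r := by
  have sorted : ∀ {a b c}, a ∈ s → c ∈ s → a < b → b < c →
      secondDivDiff f a b c = secondDivDiff f p q r →
      ∃ η ∈ s, f'' η = 2 * secondDivDiff f p q r := fun ha hc hab hbc hperm => by
    have hsub := hs.out ha hc
    obtain ⟨η, hη, h⟩ := exists_eq_two_mul_secondDivDiff_of_lt hab hbc
      (fun t ht => hf t (hsub ht)) (fun t ht => hf' t (hsub ht))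
    exact ⟨η, hsub (Ioo_subset_Icc_self hη), hperm ▸ h⟩
  rcases hpq.lt_or_gt with h₁ | h₁ <;> rcases hpr.lt_or_gt with h₂ | h₂ <;>
    rcases hqr.lt_or_gt with h₃ | h₃
  · exact sorted hp hr h₁ h₃ rfl
  · exact sorted hp hq h₂ h₃ (by unfold secondDivDiff; ring)
  · exact absurd (h₁.trans h₃) h₂.not_gt
  · exact sorted hr hq h₂ h₁ (by unfold secondDivDiff; ring)
  · exact sorted hq hr h₁ h₂ (by unfold secondDivDiff; ring)
  · exact absurd (h₃.trans h₁) h₂.not_gt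
  · exact sorted hq hp h₃ h₂ (by unfold secondDivDiff; ring)
  · exact sorted hr hp h₃ h₁ (by unfold secondDivDiff; ring)

theorem exists_sub_eq_mul_sub_of_hasDerivAt {s : Set ℝ} (hs : s.OrdConnected) {p q : ℝ}
    (hp : p ∈ s) (hq : q ∈ s) (hpq : p ≠ q) (hf : ∀ t ∈ s, HasDerivAt f (f' t) t) :
    ∃ ξ ∈ s, f p - f q = f' ξ * (p - q) := by
  wlog h : p < q generalizing p q
  · obtain ⟨ξ, hξ, e⟩ := this hq hp hpq.symm (hpq.lt_or_gt.resolve_left h)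
    exact ⟨ξ, hξ, by linarith⟩
  have hsub := hs.out hp hq
  obtain ⟨ξ, hξ, e⟩ := exists_hasDerivAt_eq_slope f f' h
    (fun t ht => (hf t (hsub ht)).continuousAt.continuousWithinAt)
    (fun t ht => hf t (hsub (Ioo_subset_Icc_self ht)))
  refine ⟨ξ, hsub (Ioo_subset_Icc_self hξ), ?_⟩
  rw [e, div_mul_eq_mul_div, eq_div_iff (sub_ne_zero.2 h.ne')]
  ring

end MeanValue

theorem injOn_of_hasDerivAt_ne_zero {f f' : ℝ → ℝ} {s : Set ℝ} (hs : s.OrdConnected)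
    (hf : ∀ t ∈ s, HasDerivAt f (f' t) t) (hf'0 : ∀ t ∈ s, f' t ≠ 0) : InjOn f s :=
  fun p hp q hq hfpq => by
    by_contra hpq
    obtain ⟨ξ, hξ, e⟩ := exists_sub_eq_mul_sub_of_hasDerivAt hs hp hq hpq hf
    rw [hfpq, sub_self, eq_comm] at e
    exact mul_ne_zero (hf'0 ξ hξ) (sub_ne_zero.2 hpq) e

noncomputable def secantStep (f : ℝ → ℝ) (p q : ℝ) : ℝ :=
  p - f p * (p - q) / (f p - f q)

def IsSecantSeq (f : ℝ → ℝ) (x : ℕ → ℝ) : Prop :=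
  ∀ n, x (n + 2) = secantStep f (x (n + 1)) (x n)

theorem secantStep_sub_eq_mul_secondDivDiff {f : ℝ → ℝ} {p q α : ℝ} (hroot : f α = 0)
    (hpq : p ≠ q) (hpα : p ≠ α) (hqα : q ≠ α) (hf : f p ≠ f q) :
    secantStep f p q - α =
      (p - α) * (q - α) * (secondDivDiff f p q α / ((f p - f q) / (p - q))) := by
  have := sub_ne_zero.2 hpq
  have := sub_ne_zero.2 hpq.symm
  have := sub_ne_zero.2 hpα
  have := sub_ne_zero.2 hpα.symm
  have := sub_ne_zero.2 hqα
  have := sub_ne_zero.2 hqα.symm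
  have := sub_ne_zero.2 hf
  unfold secantStep secondDivDiff
  rw [hroot]
  field_simp
  ring

theorem exists_secantStep_sub_eq {f f' f'' : ℝ → ℝ} {s : Set ℝ} (hs : s.OrdConnected)
    (hf : ∀ t ∈ s, HasDerivAt f (f' t) t) (hf' : ∀ t ∈ s, HasDerivAt f' (f'' t) t)
    (hf'0 : ∀ t ∈ s, f' t ≠ 0) {p q α : ℝ} (hroot : f α = 0) (hp : p ∈ s) (hq : q ∈ s)
    (hα : α ∈ s) (hpq : p ≠ q) (hpα : p ≠ α) (hqα : q ≠ α) :
    ∃ ξ ∈ s, ∃ η ∈ s,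
      secantStep f p q - α = (p - α) * (q - α) * (f'' η / 2 / f' ξ) := by
  obtain ⟨ξ, hξ, hslope⟩ := exists_sub_eq_mul_sub_of_hasDerivAt hs hp hq hpq hf
  obtain ⟨η, hη, hdd⟩ := exists_eq_two_mul_secondDivDiff hs hp hq hα hpq hpα hqα hf hf'
  refine ⟨ξ, hξ, η, hη, ?_⟩
  have hfpq := (injOn_of_hasDerivAt_ne_zero hs hf hf'0).ne hp hq hpq
  rw [secantStep_sub_eq_mul_secondDivDiff hroot hpq hpα hqα hfpq, hslope, hdd,
    mul_div_cancel_right₀ _ (sub_ne_zero.2 hpq)]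
  ring

/-- On the ball the factor `|f'' η / (2 f' ξ)|` of the error recurrence is at most `K / (2 L)`,
so `K * ε ≤ L` makes each secant step at least halve the error. -/
structure SecantBall (f f' f'' : ℝ → ℝ) (α ε L K : ℝ) : Prop where
  hasDerivAt : ∀ t ∈ ball α ε, HasDerivAt f (f' t) t
  hasDerivAt_deriv : ∀ t ∈ ball α ε, HasDerivAt f' (f'' t) t
  pos : 0 < L
  le_abs_deriv : ∀ t ∈ ball α ε, L ≤ |f' t|
  abs_deriv2_le : ∀ t ∈ ball α ε, |f'' t| ≤ K
  mul_le : K * ε ≤ L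

namespace SecantBall

variable {f f' f'' : ℝ → ℝ} {α ε L K p q : ℝ} {x : ℕ → ℝ}

theorem deriv_ne_zero (h : SecantBall f f' f'' α ε L K) {t : ℝ} (ht : t ∈ ball α ε) :
    f' t ≠ 0 :=
  abs_pos.1 (h.pos.trans_le (h.le_abs_deriv t ht))

theorem injOn (h : SecantBall f f' f'' α ε L K) : InjOn f (ball α ε) :=
  injOn_of_hasDerivAt_ne_zero (by rw [Real.ball_eq_Ioo]; exact ordConnected_Ioo) h.hasDerivAt
    fun _ => h.deriv_ne_zero

theorem exists_secantStep_sub_eq (h : SecantBall f f' f'' α ε L K) (hroot : f α = 0)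
    (hp : p ∈ ball α ε) (hq : q ∈ ball α ε) (hpq : p ≠ q) (hpα : p ≠ α) (hqα : q ≠ α) :
    ∃ ξ η, dist ξ α ≤ max (dist p α) (dist q α) ∧ dist η α ≤ max (dist p α) (dist q α) ∧
      secantStep f p q - α = (p - α) * (q - α) * (f'' η / 2 / f' ξ) := by
  set r := max (dist p α) (dist q α)
  have hsub : closedBall α r ⊆ ball α ε := closedBall_subset_ball (max_lt hp hq)
  obtain ⟨ξ, hξ, η, hη, e⟩ := _root_.exists_secantStep_sub_eq
    (by rw [Real.closedBall_eq_Icc]; exact ordConnected_Icc)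
    (fun t ht => h.hasDerivAt t (hsub ht)) (fun t ht => h.hasDerivAt_deriv t (hsub ht))
    (fun t ht => h.deriv_ne_zero (hsub ht)) hroot (mem_closedBall.2 (le_max_left _ _))
    (mem_closedBall.2 (le_max_right _ _))
    (mem_closedBall_self (dist_nonneg.trans (le_max_left _ _))) hpq hpα hqα
  exact ⟨ξ, η, hξ, hη, e⟩

theorem abs_div_le (h : SecantBall f f' f'' α ε L K) {ξ η : ℝ} (hξ : ξ ∈ ball α ε)
    (hη : η ∈ ball α ε) : |f'' η / 2 / f' ξ| * ε ≤ 1 / 2 := by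
  have hL := h.pos.trans_le (h.le_abs_deriv ξ hξ)
  rw [abs_div, abs_div, abs_two, div_div, div_mul_eq_mul_div, div_le_iff₀ (by positivity)]
  nlinarith [h.abs_deriv2_le η hη, h.le_abs_deriv ξ hξ, h.mul_le, (dist_nonneg.trans_lt hξ).le]

theorem dist_secantStep_le (h : SecantBall f f' f'' α ε L K) (hroot : f α = 0)
    (hp : p ∈ ball α ε) (hq : q ∈ ball α ε) (hpq : p ≠ q) (hpα : p ≠ α) (hqα : q ≠ α) :
    dist (secantStep f p q) α ≤ dist p α / 2 := by
  obtain ⟨ξ, η, hξ, hη, e⟩ := h.exists_secantStep_sub_eq hroot hp hq hpq hpα hqα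
  have hmax := max_lt (mem_ball.1 hp) (mem_ball.1 hq)
  have hc := h.abs_div_le (hξ.trans_lt hmax) (hη.trans_lt hmax)
  rw [Real.dist_eq, e, abs_mul, abs_mul, ← Real.dist_eq, ← Real.dist_eq]
  have hq' : dist q α * |f'' η / 2 / f' ξ| ≤ 1 / 2 :=
    (mul_le_mul_of_nonneg_right (le_of_lt hq) (abs_nonneg _)).trans (by linarith)
  nlinarith [dist_nonneg (x := p) (y := α)]

theorem secantStep_ne (h : SecantBall f f' f'' α ε L K) (hroot : f α = 0)
    (hp : p ∈ ball α ε) (hq : q ∈ ball α ε) (hpq : p ≠ q) (hpα : p ≠ α) :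
    secantStep f p q ≠ p := by
  have hfp : f p ≠ 0 := hroot ▸ h.injOn.ne hp (mem_ball_self (dist_nonneg.trans_lt hp)) hpα
  have hfpq : f p - f q ≠ 0 := sub_ne_zero.2 (h.injOn.ne hp hq hpq)
  rw [secantStep, Ne, sub_eq_self]
  exact div_ne_zero (mul_ne_zero hfp (sub_ne_zero.2 hpq)) hfpq

theorem isSecantSeq_mem_ball (h : SecantBall f f' f'' α ε L K) (hroot : f α = 0)
    (hx : IsSecantSeq f x) (hx0 : x 0 ∈ ball α ε) (hx1 : x 1 ∈ ball α ε) (hx01 : x 0 ≠ x 1)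
    (hxα : ∀ n, x n ≠ α) (n : ℕ) : x n ∈ ball α ε ∧ x (n + 1) ≠ x n := by
  suffices ∀ n, x n ∈ ball α ε ∧ x (n + 1) ∈ ball α ε ∧ x (n + 1) ≠ x n from
    ⟨(this n).1, (this n).2.2⟩
  intro n
  induction n with
  | zero => exact ⟨hx0, hx1, hx01.symm⟩
  | succ n ih =>
    obtain ⟨h0, h1, hne⟩ := ih
    refine ⟨h1, ?_, ?_⟩ <;> rw [hx n]
    · exact (h.dist_secantStep_le hroot h1 h0 hne (hxα _) (hxα _)).trans_lt
        (by linarith [dist_nonneg (x := x (n + 1)) (y := α), mem_ball.1 h1])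
    · exact h.secantStep_ne hroot h1 h0 hne (hxα _)

theorem tendsto_of_isSecantSeq (h : SecantBall f f' f'' α ε L K) (hroot : f α = 0)
    (hx : IsSecantSeq f x) (hmem : ∀ n, x n ∈ ball α ε ∧ x (n + 1) ≠ x n)
    (hxα : ∀ n, x n ≠ α) : Tendsto x atTop (𝓝 α) := by
  have hgeom (k : ℕ) : dist (x (k + 1)) α ≤ (1 / 2) ^ k * dist (x 1) α :=
    le_geom (u := fun k => dist (x (k + 1)) α) (by norm_num) k fun j _ => by
      rw [hx j, mul_comm, ← div_eq_mul_one_div]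
      exact h.dist_secantStep_le hroot (hmem _).1 (hmem _).1 (hmem _).2 (hxα _) (hxα _)
  have hpow : Tendsto (fun k : ℕ => (1 / 2 : ℝ) ^ k * dist (x 1) α) atTop (𝓝 0) := by
    simpa using (tendsto_pow_atTop_nhds_zero_of_lt_one (r := (1 / 2 : ℝ)) (by norm_num)
      (by norm_num)).mul_const _
  exact (tendsto_add_atTop_iff_nat 1).1
    (tendsto_iff_dist_tendsto_zero.2 (squeeze_zero (fun _ => dist_nonneg) hgeom hpow))

theorem tendsto_div_rpow_goldenRatio_of_isSecantSeq (h : SecantBall f f' f'' α ε L K)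
    (hroot : f α = 0) (hf'' : ContinuousAt f'' α) (hf''α : f'' α ≠ 0)
    (hx : IsSecantSeq f x) (hmem : ∀ n, x n ∈ ball α ε ∧ x (n + 1) ≠ x n)
    (hxα : ∀ n, x n ≠ α) :
    Tendsto (fun n => |x (n + 1) - α| / |x n - α| ^ φ) atTop
      (𝓝 (|f'' α / (2 * f' α)| ^ (φ - 1))) := by
  choose ξ η hξ hη e using fun n => h.exists_secantStep_sub_eq hroot
    (hmem (n + 1)).1 (hmem n).1 (hmem n).2 (hxα _) (hxα _)
  have hdist := tendsto_iff_dist_tendsto_zero.1 (h.tendsto_of_isSecantSeq hroot hx hmem hxα)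
  have hmax : Tendsto (fun n => max (dist (x (n + 1)) α) (dist (x n) α)) atTop (𝓝 0) := by
    simpa using (hdist.comp (tendsto_add_atTop_nat 1)).max hdist
  have hξ' : Tendsto ξ atTop (𝓝 α) :=
    tendsto_iff_dist_tendsto_zero.2 (squeeze_zero (fun _ => dist_nonneg) hξ hmax)
  have hη' : Tendsto η atTop (𝓝 α) :=
    tendsto_iff_dist_tendsto_zero.2 (squeeze_zero (fun _ => dist_nonneg) hη hmax)
  have hα : α ∈ ball α ε := mem_ball_self (dist_nonneg.trans_lt (hmem 0).1)
  have hc :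
      Tendsto (fun n => |f'' (η n) / 2 / f' (ξ n)|) atTop (𝓝 |f'' α / (2 * f' α)|) := by
    rw [← div_div]
    exact (((hf''.tendsto.comp hη').div_const 2).div
      ((h.hasDerivAt_deriv α hα).continuousAt.tendsto.comp hξ') (h.deriv_ne_zero hα)).abs
  have hm : 0 < |f'' α / (2 * f' α)| :=
    abs_pos.2 (div_ne_zero hf''α (mul_ne_zero two_ne_zero (h.deriv_ne_zero hα)))
  refine tendsto_div_rpow_goldenRatio (fun n => abs_pos.2 (sub_ne_zero.2 (hxα n))) (fun n => ?_)
    hc hm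
  rw [hx n, e, abs_mul, abs_mul]

end SecantBall

theorem exists_secantBall {f f' f'' : ℝ → ℝ} {α : ℝ} {U : Set ℝ} (hU : U ∈ 𝓝 α)
    (hf : ∀ t ∈ U, HasDerivAt f (f' t) t) (hf' : ∀ t ∈ U, HasDerivAt f' (f'' t) t)
    (hf'α : f' α ≠ 0) (hf'' : ContinuousAt f'' α) :
    ∃ ε > 0, ∃ L K, SecantBall f f' f'' α ε L K := by
  set L := |f' α| / 2
  set K := |f'' α| + 1
  have hL : 0 < L := by positivity
  have hK : 0 < K := by positivity
  have hf'c : ContinuousAt f' α := (hf' α (mem_of_mem_nhds hU)).continuousAt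
  have hev : ∀ᶠ t in 𝓝 α, t ∈ U ∧ L < |f' t| ∧ |f'' t| < K :=
    Filter.Eventually.and hU <|
      (hf'c.abs.eventually (lt_mem_nhds (half_lt_self (abs_pos.2 hf'α)))).and
        (hf''.abs.eventually (gt_mem_nhds (lt_add_one _)))
  obtain ⟨ε₀, hε₀, hball⟩ := Metric.eventually_nhds_iff_ball.1 hev
  set ε := min ε₀ (L / K)
  have hsub : ball α ε ⊆ ball α ε₀ := ball_subset_ball (min_le_left _ _)
  refine ⟨ε, lt_min hε₀ (by positivity), L, K, fun t ht => hf t (hball t (hsub ht)).1,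
    fun t ht => hf' t (hball t (hsub ht)).1, hL, fun t ht => (hball t (hsub ht)).2.1.le,
    fun t ht => (hball t (hsub ht)).2.2.le, ?_⟩
  calc K * ε ≤ K * (L / K) := mul_le_mul_of_nonneg_left (min_le_right _ _) hK.le
    _ = L := mul_div_cancel₀ L hK.ne'

theorem ContDiffOn.hasDerivAt_deriv_two {f : ℝ → ℝ} {U : Set ℝ} (hf : ContDiffOn ℝ 2 f U)
    (hU : IsOpen U) {t : ℝ} (ht : t ∈ U) :
    HasDerivAt f (deriv f t) t ∧ HasDerivAt (deriv f) (deriv (deriv f) t) t ∧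
      ContinuousAt (deriv (deriv f)) t := by
  have hf' : ContDiffOn ℝ 1 (deriv f) U := hf.deriv_of_isOpen hU (by norm_num)
  exact ⟨((hf.differentiableOn two_ne_zero t ht).differentiableAt (hU.mem_nhds ht)).hasDerivAt,
    ((hf'.differentiableOn one_ne_zero t ht).differentiableAt (hU.mem_nhds ht)).hasDerivAt,
    (hf'.continuousOn_deriv_of_isOpen hU le_rfl).continuousAt (hU.mem_nhds ht)⟩

theorem secant_convergence_simple_root (f : ℝ → ℝ) (α δ : ℝ) (hδ : 0 < δ)
    (hf : ContDiffOn ℝ 2 f (Set.Icc (α - δ) (α + δ)))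
    (hroot : f α = 0) (hd1 : deriv f α ≠ 0) (hd2 : iteratedDeriv 2 f α ≠ 0) :
    ∃ ε > 0, ∀ x : ℕ → ℝ,
      |x 0 - α| < ε → |x 1 - α| < ε → x 0 ≠ x 1 →
      (∀ n, x n ≠ α) →
      (∀ n, x (n + 2) =
        x (n + 1) - f (x (n + 1)) * (x (n + 1) - x n) / (f (x (n + 1)) - f (x n))) →
      (∀ n, f (x (n + 1)) ≠ f (x n)) ∧
      (∀ n, |x n - α| < ε) ∧
      Tendsto x atTop (𝓝 α) ∧
      Tendsto (fun n => |x (n + 1) - α| / |x n - α| ^ ((1 + Real.sqrt 5) / 2))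
        atTop (𝓝 (|iteratedDeriv 2 f α / (2 * deriv f α)| ^ ((1 + Real.sqrt 5) / 2 - 1))) := by
  have hU : Ioo (α - δ) (α + δ) ∈ 𝓝 α := Ioo_mem_nhds (by linarith) (by linarith)
  have hderiv := fun t (ht : t ∈ Ioo (α - δ) (α + δ)) =>
    (hf.mono Ioo_subset_Icc_self).hasDerivAt_deriv_two isOpen_Ioo ht
  rw [iteratedDeriv_succ, iteratedDeriv_one] at hd2 ⊢
  obtain ⟨ε, hε, L, K, hball⟩ := exists_secantBall hU (fun t ht => (hderiv t ht).1)
    (fun t ht => (hderiv t ht).2.1) hd1 (hderiv α (mem_of_mem_nhds hU)).2.2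
  refine ⟨ε, hε, fun x hx0 hx1 hx01 hxα hx => ?_⟩
  have hmem := hball.isSecantSeq_mem_ball hroot hx hx0 hx1 hx01 hxα
  exact ⟨fun n => hball.injOn.ne (hmem (n + 1)).1 (hmem n).1 (hmem n).2, fun n => (hmem n).1,
    hball.tendsto_of_isSecantSeq hroot hx hmem hxα,
    hball.tendsto_div_rpow_goldenRatio_of_isSecantSeq hroot (hderiv α (mem_of_mem_nhds hU)).2.2
      hd2 hx hmem hxα⟩
end

section
/- Let {E_n} be positive reals satisfying E_{n+1} = E_n E_{n−1} m_n with m_n > 0 and lim m_n = m_α > 0, and suppose E_n → 0 with E_0, E_1 ∈ (0,1). Then lim_{n→∞} E_{n+1}/E_n^{r₀} = m_α^{r₀−1}, where r₀ = (1+√5)/2. -/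
/-!
Taking logarithms turns the recurrence into the inhomogeneous Fibonacci recurrence
`u (n + 2) = u (n + 1) + u n + log (m n)` for `u n = log (E n)`. Factoring
`X² - X - 1 = (X - φ)(X - ψ)`, the sequence `u (n + 1) - φ u n` obeys a first-order recurrence
with multiplier `ψ`, a contraction since `|ψ| < 1`; hence it converges to the fixed point
`(φ - 1) log mα`, and exponentiating gives the limit of `E (n + 1) / E n ^ φ`.
-/

open Filter Topology Real
open scoped goldenRatio

theorem le_pow_mul_add_of_le_mul_add {a : ℕ → ℝ} {q c : ℝ} {N : ℕ} (hq0 : 0 ≤ q) (hq1 : q < 1)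
    (hc : 0 ≤ c) (h : ∀ n ≥ N, a (n + 1) ≤ q * a n + c) (k : ℕ) :
    a (N + k) ≤ q ^ k * a N + c / (1 - q) := by
  induction k with
  | zero => simp only [add_zero, pow_zero, one_mul, le_add_iff_nonneg_right]; bound
  | succ k ih =>
    have hstep : q * (q ^ k * a N + c / (1 - q)) + c = q ^ (k + 1) * a N + c / (1 - q) := by
      field_simp [(sub_pos.2 hq1).ne']
      ring
    calc a (N + (k + 1)) ≤ q * a (N + k) + c := h (N + k) (Nat.le_add_right N k)
      _ ≤ q * (q ^ k * a N + c / (1 - q)) + c := by gcongr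
      _ = q ^ (k + 1) * a N + c / (1 - q) := hstep

theorem tendsto_zero_of_le_mul_add {a b : ℕ → ℝ} {q : ℝ} (ha : ∀ n, 0 ≤ a n) (hq0 : 0 ≤ q)
    (hq1 : q < 1) (h : ∀ n, a (n + 1) ≤ q * a n + b n) (hb : Tendsto b atTop (𝓝 0)) :
    Tendsto a atTop (𝓝 0) := by
  refine tendsto_order.2 ⟨fun ε hε => Eventually.of_forall fun n => hε.trans_le (ha n),
    fun ε hε => ?_⟩
  have hq : 0 < 1 - q := sub_pos.2 hq1
  obtain ⟨N, hN⟩ := eventually_atTop.1 (hb.eventually (ge_mem_nhds (by positivity :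
    0 < ε / 2 * (1 - q))))
  have hbound := le_pow_mul_add_of_le_mul_add (a := a) (c := ε / 2 * (1 - q)) hq0 hq1
    (by positivity) fun n hn => (h n).trans (by gcongr; exact hN n hn)
  have hgeom : Tendsto (fun k => q ^ k * a N) atTop (𝓝 0) := by
    simpa using (tendsto_pow_atTop_nhds_zero_of_lt_one hq0 hq1).mul_const (a N)
  obtain ⟨K, hK⟩ := eventually_atTop.1 (hgeom.eventually (gt_mem_nhds (half_pos hε)))
  refine eventually_atTop.2 ⟨N + K, fun n hn => ?_⟩
  obtain ⟨k, rfl⟩ := Nat.exists_eq_add_of_le (le_trans (Nat.le_add_right N K) hn)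
  calc a (N + k) ≤ q ^ k * a N + ε / 2 * (1 - q) / (1 - q) := hbound k
    _ < ε / 2 + ε / 2 * (1 - q) / (1 - q) := by gcongr; exact hK k (by omega)
    _ = ε := by field_simp; ring

theorem tendsto_sub_goldenRatio_mul_of_fib_rec {u v : ℕ → ℝ} {μ : ℝ}
    (hrec : ∀ n, u (n + 2) = u (n + 1) + u n + v n) (hv : Tendsto v atTop (𝓝 μ)) :
    Tendsto (fun n => u (n + 1) - φ * u n) atTop (𝓝 ((φ - 1) * μ)) := by
  set y : ℕ → ℝ := fun n => u (n + 1) - φ * u n - (φ - 1) * μ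
  have hy : ∀ n, y (n + 1) = ψ * y n + (v n - μ) := by
    intro n
    simp only [y, hrec n]
    linear_combination (u n + μ) * goldenRatio_mul_goldenConj
  have habs : ∀ n, |y (n + 1)| ≤ -ψ * |y n| + |v n - μ| := by
    intro n
    rw [hy n, ← abs_of_neg goldenConj_neg, ← abs_mul]
    exact abs_add_le _ _
  have hy0 : Tendsto y atTop (𝓝 0) := by
    refine tendsto_zero_iff_abs_tendsto_zero _ |>.2 <| tendsto_zero_of_le_mul_add
      (fun n => abs_nonneg _) (by linarith [goldenConj_neg]) (by linarith [neg_one_lt_goldenConj])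
      habs ?_
    simpa using (hv.sub_const μ).abs
  simpa [y] using hy0.add_const ((φ - 1) * μ)

theorem secant_error_qorder_general (E m : ℕ → ℝ) (mα : ℝ)
    (hE : ∀ n, 0 < E n) (hm : ∀ n, 0 < m n)
    (hrec : ∀ n, E (n + 2) = E (n + 1) * E n * m n)
    (hmlim : Tendsto m atTop (𝓝 mα)) (hmα : 0 < mα) :
    Tendsto (fun n => E (n + 1) / E n ^ ((1 + Real.sqrt 5) / 2)) atTop
      (𝓝 (mα ^ ((1 + Real.sqrt 5) / 2 - 1))) := by
  have hlog : ∀ n, log (E (n + 2)) = log (E (n + 1)) + log (E n) + log (m n) := fun n => by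
    rw [hrec n, log_mul (mul_pos (hE _) (hE _)).ne' (hm n).ne', log_mul (hE _).ne' (hE _).ne']
  have hlim := (continuous_exp.tendsto _).comp
    (tendsto_sub_goldenRatio_mul_of_fib_rec (u := fun n => log (E n)) hlog (hmlim.log hmα.ne'))
  convert hlim using 2 with n
  · simp only [Function.comp_apply, exp_sub, exp_log (hE _), rpow_def_of_pos (hE n), mul_comm]
  · rw [rpow_def_of_pos hmα, mul_comm]

theorem secant_error_qorder (E m : ℕ → ℝ) (mα : ℝ)
    (hE : ∀ n, 0 < E n) (hm : ∀ n, 0 < m n)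
    (hrec : ∀ n, E (n + 2) = E (n + 1) * E n * m n)
    (hmlim : Tendsto m atTop (𝓝 mα)) (hmα : 0 < mα)
    (hElim : Tendsto E atTop (𝓝 0))
    (hE0 : E 0 ∈ Set.Ioo (0 : ℝ) 1) (hE1 : E 1 ∈ Set.Ioo (0 : ℝ) 1) :
    Tendsto (fun n => E (n + 1) / E n ^ ((1 + Real.sqrt 5) / 2)) atTop
      (𝓝 (mα ^ ((1 + Real.sqrt 5) / 2 - 1))) :=
  secant_error_qorder_general E m mα hE hm hrec hmlim hmα
end

section
/- Let m ≥ 3 and define b(k) = (m k^{m−1} − (m−1) k^{m−2} − k^{2m−2})/(1 − k^m)² for k ∈ [(2m−3)/(2m), r] with r ∈ ((2m−3)/(2m), 1). Then b(k) = −k^{m−2}(Σ_{i=0}^{m−2} Σ_{j=0}^{i} k^j)/(Σ_{j=0}^{m−1} k^j)², b(k) < 0, and |b(k)| < (m−1)/m. -/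
open Finset in
theorem bk_bound (m : ℕ) (hm : 3 ≤ m) (r : ℝ)
    (hr : r ∈ Set.Ioo ((2 * (m : ℝ) - 3) / (2 * m)) 1) :
    ∀ k ∈ Set.Icc ((2 * (m : ℝ) - 3) / (2 * m)) r,
      ((m : ℝ) * k ^ (m - 1) - ((m : ℝ) - 1) * k ^ (m - 2) - k ^ (2 * m - 2)) /
          (1 - k ^ m) ^ 2 =
        -(k ^ (m - 2) * (∑ i ∈ range (m - 1), ∑ j ∈ range (i + 1), k ^ j)) /
          (∑ j ∈ range m, k ^ j) ^ 2 ∧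
      ((m : ℝ) * k ^ (m - 1) - ((m : ℝ) - 1) * k ^ (m - 2) - k ^ (2 * m - 2)) /
          (1 - k ^ m) ^ 2 < 0 ∧
      |((m : ℝ) * k ^ (m - 1) - ((m : ℝ) - 1) * k ^ (m - 2) - k ^ (2 * m - 2)) /
          (1 - k ^ m) ^ 2| < ((m : ℝ) - 1) / m := by
  obtain ⟨n, rfl⟩ : ∃ n, m = n + 3 := ⟨m - 3, by omega⟩
  obtain ⟨hr1, hr2⟩ := hr
  intro k hk
  obtain ⟨hk1, hk2⟩ := hk
  have hk3 : k < 1 := lt_of_le_of_lt hk2 hr2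
  have hk0 : (0 : ℝ) < k := by
    have hn0 : (0:ℝ) ≤ (n:ℝ) := Nat.cast_nonneg n
    have hnum : (0:ℝ) < 2 * ((n:ℕ) + 3 : ℕ) - 3 := by push_cast; linarith
    have hden : (0:ℝ) < 2 * ((n:ℕ) + 3 : ℕ) := by push_cast; linarith
    exact lt_of_lt_of_le (div_pos hnum hden) hk1
  simp only [show n + 3 - 1 = n + 2 by omega, show n + 3 - 2 = n + 1 by omega,
    show 2 * (n + 3) - 2 = 2 * n + 4 by omega]
  push_cast
  set S : ℝ := ∑ j ∈ range (n + 3), k ^ j with hSdef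
  set T : ℝ := ∑ i ∈ range (n + 2), ∑ j ∈ range (i + 1), k ^ j with hTdef
  have h1k : (0:ℝ) < 1 - k := by linarith
  have inner : ∀ i : ℕ, (1 - k) * ∑ j ∈ range (i + 1), k ^ j = 1 - k ^ (i + 1) := by
    intro i; linear_combination -(geom_sum_mul k (i + 1))
  have hS : (1 - k) * S = 1 - k ^ (n + 3) := inner (n + 2)
  have hden : (1 - k ^ (n + 3)) ^ 2 = (1 - k) ^ 2 * S ^ 2 := by
    rw [← hS]; ring
  have hT : (1 - k) * T = ((n : ℝ) + 2) - k * ∑ j ∈ range (n + 2), k ^ j := by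
    rw [hTdef, Finset.mul_sum]
    rw [Finset.sum_congr rfl (fun i _ => inner i)]
    rw [Finset.sum_sub_distrib, Finset.sum_const, Finset.card_range]
    have : ∑ i ∈ range (n + 2), k ^ (i + 1) = k * ∑ j ∈ range (n + 2), k ^ j := by
      rw [Finset.mul_sum]
      exact Finset.sum_congr rfl fun i _ => by ring
    rw [this]; push_cast; ring
  have hT2 : (1 - k) ^ 2 * T = ((n : ℝ) + 2) - ((n : ℝ) + 3) * k + k ^ (n + 3) := by
    linear_combination (1 - k) * hT - k * inner (n + 1)
  have hSpos : 0 < S :=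
    Finset.sum_pos (fun j _ => pow_pos hk0 j) (nonempty_range_iff.mpr (by omega))
  have hTpos : 0 < T :=
    Finset.sum_pos
      (fun i _ => Finset.sum_pos (fun j _ => pow_pos hk0 j)
        (nonempty_range_iff.mpr (Nat.succ_ne_zero i)))
      (nonempty_range_iff.mpr (by omega))
  have hd1 : (1 - k ^ (n + 3)) ^ 2 ≠ 0 := by
    have h : k ^ (n + 3) < 1 := pow_lt_one₀ hk0.le hk3 (by omega)
    have h2 : (0:ℝ) < 1 - k ^ (n + 3) := by linarith
    exact pow_ne_zero 2 h2.ne'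
  have hd2 : S ^ 2 ≠ 0 := by positivity
  have heq : ((n : ℝ) + 3) * k ^ (n + 2) - ((n : ℝ) + 3 - 1) * k ^ (n + 1) - k ^ (2 * n + 4) =
      -((1 - k) ^ 2 * (k ^ (n + 1) * T)) := by
    linear_combination (k ^ (n + 1)) * hT2
  have goal1 : (((n : ℝ) + 3) * k ^ (n + 2) - ((n : ℝ) + 3 - 1) * k ^ (n + 1) - k ^ (2 * n + 4)) /
      (1 - k ^ (n + 3)) ^ 2 = -(k ^ (n + 1) * T) / S ^ 2 := by
    rw [div_eq_div_iff hd1 hd2, heq, hden]; ring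
  refine ⟨goal1, ?_, ?_⟩
  · rw [goal1]
    exact div_neg_of_neg_of_pos (neg_lt_zero.mpr (mul_pos (pow_pos hk0 _) hTpos))
      (pow_pos hSpos 2)
  · rw [goal1, abs_div, abs_neg, abs_of_pos (mul_pos (pow_pos hk0 _) hTpos),
      abs_of_pos (pow_pos hSpos 2)]
    rw [div_lt_div_iff₀ (pow_pos hSpos 2) (by positivity : (0:ℝ) < (n:ℝ) + 3)]
    -- k^(n+1) * T * (n+3) < (n+3-1) * S^2
    have ha : T ≤ ((n : ℝ) + 2) * S := by
      have hle : ∀ i ∈ range (n + 2), (∑ j ∈ range (i + 1), k ^ j) ≤ S := by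
        intro i hi
        apply Finset.sum_le_sum_of_subset_of_nonneg
        · exact Finset.range_subset_range.mpr (by simp only [Finset.mem_range] at hi; omega)
        · exact fun j _ _ => (pow_pos hk0 j).le
      calc T ≤ ∑ _i ∈ range (n + 2), S := Finset.sum_le_sum hle
        _ = ((n : ℝ) + 2) * S := by
            rw [Finset.sum_const, Finset.card_range, nsmul_eq_mul]; push_cast; ring
    have hmid : ((n : ℝ) + 1) * k ^ (n + 1) ≤ ∑ i ∈ range (n + 1), k ^ (i + 1) := by
      have hle : ∀ i ∈ range (n + 1), k ^ (n + 1) ≤ k ^ (i + 1) := fun i hi =>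
        pow_le_pow_of_le_one hk0.le hk3.le
          (by simp only [Finset.mem_range] at hi; omega)
      calc ((n : ℝ) + 1) * k ^ (n + 1) = ∑ _i ∈ range (n + 1), k ^ (n + 1) := by
            rw [Finset.sum_const, Finset.card_range, nsmul_eq_mul]; push_cast; ring
        _ ≤ _ := Finset.sum_le_sum hle
    have hSsplit : S = (∑ i ∈ range (n + 1), k ^ (i + 1)) + 1 + k ^ (n + 2) := by
      rw [hSdef, Finset.sum_range_succ, Finset.sum_range_succ', pow_zero]
    have hkk : k ^ (n + 1) ≤ k := by
      calc k ^ (n + 1) ≤ k ^ 1 := pow_le_pow_of_le_one hk0.le hk3.le (by omega)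
        _ = k := pow_one k
    have key : 2 * k ^ (n + 1) < 1 + k ^ (n + 2) := by
      nlinarith [mul_pos h1k (sub_pos.mpr (lt_of_le_of_lt hkk hk3)), pow_succ k (n + 1)]
    have hb : ((n : ℝ) + 3) * k ^ (n + 1) < S := by
      rw [hSsplit]; nlinarith [hmid, key]
    have hkp : (0:ℝ) < k ^ (n + 1) := pow_pos hk0 _
    nlinarith [mul_le_mul_of_nonneg_left ha
        (mul_pos hkp (by positivity : (0:ℝ) < (n:ℝ) + 3)).le,
      mul_lt_mul_of_pos_right hb (mul_pos (by positivity : (0:ℝ) < (n:ℝ) + 2) hSpos)]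
end

section
/- For m ≥ 1, the polynomial p_{2m}(k) = k^{2m} + k^{2m−1} − 1 has exactly two real roots: one, c_{2m,0}, lies in (0,1), and the other, c_{2m,1}, lies in (−2, −1). Furthermore, q_{2m}(k) = k^{2m} + k^{2m−1} − 2 has a unique root c_{2m,2} in [−2, c_{2m,1}), and q_{2m}(x) > 0 for x < c_{2m,2} while q_{2m}(y) < 0 for y ∈ (c_{2m,2}, −1). -/
/-!
Write `n = 2m - 1`, which is odd, so that `p = f - 1` and `q = f - 2` with
`f x = x ^ (n + 1) + x ^ n = x ^ n (x + 1)`. The function `f` is strictly increasing on `[0, ∞)`,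
nonpositive on `[-1, 0]` and strictly decreasing on `(-∞, -1]`, where both factors are negative
and grow in absolute value as `x` decreases. Together with `f 0 = f (-1) = 0`, `f 1 = 2` and
`f (-2) = 2 ^ n ≥ 2`, the intermediate value theorem places exactly one root of `f = 1` in each
of `(0, 1)` and `(-2, -1)`, and one root of `f = 2` in `[-2, c₁)`; monotonicity on `(-∞, -1]`
gives the sign of `q` on either side of it.
-/

open Set

variable {n : ℕ}

lemma strictMonoOn_pow_succ_add_pow (n : ℕ) :
    StrictMonoOn (fun x : ℝ => x ^ (n + 1) + x ^ n) (Ici 0) :=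
  (pow_left_strictMonoOn₀ n.succ_ne_zero).add_monotone pow_left_monotoneOn

lemma Odd.strictAntiOn_pow_succ_add_pow (hn : Odd n) :
    StrictAntiOn (fun x : ℝ => x ^ (n + 1) + x ^ n) (Iic (-1)) := by
  intro x hx y hy hxy
  have hyn : y ^ n < 0 := hn.pow_neg (by linarith [mem_Iic.mp hy])
  have hxyn : x ^ n < y ^ n := hn.strictMono_pow hxy
  have hx1 : x + 1 < 0 := by linarith [mem_Iic.mp hy]
  simp only [pow_succ]
  nlinarith [mul_pos_of_neg_of_neg (sub_neg.mpr hxyn) hx1,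
    mul_pos_of_neg_of_neg hyn (sub_neg.mpr hxy)]

lemma Odd.pow_succ_add_pow_nonpos (hn : Odd n) {x : ℝ} (hx : x ∈ Icc (-1) 0) :
    x ^ (n + 1) + x ^ n ≤ 0 := by
  have : x ^ (n + 1) + x ^ n = x ^ n * (x + 1) := by ring
  rw [this]
  exact mul_nonpos_of_nonpos_of_nonneg (hn.pow_nonpos hx.2) (by linarith [hx.1])

lemma Odd.neg_one_pow_succ_add_pow (hn : Odd n) : (-1 : ℝ) ^ (n + 1) + (-1) ^ n = 0 := by
  rw [hn.add_one.neg_one_pow, hn.neg_one_pow]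
  norm_num

lemma Odd.neg_two_pow_succ_add_pow (hn : Odd n) : (-2 : ℝ) ^ (n + 1) + (-2) ^ n = 2 ^ n := by
  rw [hn.add_one.neg_pow, hn.neg_pow, pow_succ]
  ring

lemma exists_pow_succ_add_pow_eq_one_of_mem_Ioo (hn : n ≠ 0) :
    ∃ c ∈ Ioo (0 : ℝ) 1, c ^ (n + 1) + c ^ n = 1 :=
  intermediate_value_Ioo zero_le_one (by fun_prop) (by simp [hn])

lemma Odd.exists_pow_succ_add_pow_eq_one_of_mem_Ioo (hn : Odd n) :
    ∃ c ∈ Ioo (-2 : ℝ) (-1), c ^ (n + 1) + c ^ n = 1 := by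
  refine intermediate_value_Ioo' (by norm_num) (by fun_prop) ?_
  rw [mem_Ioo, hn.neg_one_pow_succ_add_pow, hn.neg_two_pow_succ_add_pow]
  exact ⟨zero_lt_one, one_lt_pow₀ one_lt_two hn.pos.ne'⟩

lemma Odd.exists_pow_succ_add_pow_eq_two_of_mem_Ico (hn : Odd n) {c : ℝ} (hc : -2 < c)
    (hfc : c ^ (n + 1) + c ^ n = 1) :
    ∃ d ∈ Ico (-2 : ℝ) c, d ^ (n + 1) + d ^ n = 2 := by
  refine intermediate_value_Ico' hc.le (by fun_prop) ?_
  rw [mem_Ioc, hfc, hn.neg_two_pow_succ_add_pow]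
  exact ⟨one_lt_two, le_self_pow₀ one_le_two hn.pos.ne'⟩

lemma Odd.eq_or_eq_of_pow_succ_add_pow_eq_one (hn : Odd n) {c₀ c₁ x : ℝ} (hc₀ : 0 ≤ c₀)
    (hc₁ : c₁ ≤ -1) (hfc₀ : c₀ ^ (n + 1) + c₀ ^ n = 1) (hfc₁ : c₁ ^ (n + 1) + c₁ ^ n = 1)
    (hfx : x ^ (n + 1) + x ^ n = 1) : x = c₀ ∨ x = c₁ := by
  rcases le_or_gt 0 x with hx | hx
  · exact .inl <| (strictMonoOn_pow_succ_add_pow n).injOn hx hc₀ (hfx.trans hfc₀.symm)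
  rcases le_or_gt x (-1) with hx' | hx'
  · exact .inr <| hn.strictAntiOn_pow_succ_add_pow.injOn hx' hc₁ (hfx.trans hfc₁.symm)
  · linarith [hn.pow_succ_add_pow_nonpos ⟨hx'.le, hx.le⟩]

theorem p2m_q2m_roots (m : ℕ) (hm : 1 ≤ m) :
    ∃ c0 ∈ Set.Ioo (0 : ℝ) 1, ∃ c1 ∈ Set.Ioo (-2 : ℝ) (-1),
      c0 ^ (2 * m) + c0 ^ (2 * m - 1) - 1 = 0 ∧
      c1 ^ (2 * m) + c1 ^ (2 * m - 1) - 1 = 0 ∧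
      (∀ x : ℝ, x ^ (2 * m) + x ^ (2 * m - 1) - 1 = 0 → x = c0 ∨ x = c1) ∧
      ∃ c2 ∈ Set.Ico (-2 : ℝ) c1,
        c2 ^ (2 * m) + c2 ^ (2 * m - 1) - 2 = 0 ∧
        (∀ x ∈ Set.Ico (-2 : ℝ) c1, x ^ (2 * m) + x ^ (2 * m - 1) - 2 = 0 → x = c2) ∧
        (∀ x : ℝ, x < c2 → 0 < x ^ (2 * m) + x ^ (2 * m - 1) - 2) ∧
        (∀ y ∈ Set.Ioo c2 (-1 : ℝ), y ^ (2 * m) + y ^ (2 * m - 1) - 2 < 0) := by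
  obtain ⟨n, hn, hmn⟩ : ∃ n, Odd n ∧ 2 * m = n + 1 := ⟨2 * m - 1, ⟨m - 1, by omega⟩, by omega⟩
  simp only [hmn, Nat.add_sub_cancel, sub_eq_zero, sub_pos, sub_neg]
  obtain ⟨c₀, hc₀, hfc₀⟩ := exists_pow_succ_add_pow_eq_one_of_mem_Ioo hn.pos.ne'
  obtain ⟨c₁, hc₁, hfc₁⟩ := hn.exists_pow_succ_add_pow_eq_one_of_mem_Ioo
  obtain ⟨c₂, hc₂, hfc₂⟩ := hn.exists_pow_succ_add_pow_eq_two_of_mem_Ico hc₁.1 hfc₁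
  have hanti := hn.strictAntiOn_pow_succ_add_pow
  have hc₂' : c₂ ∈ Iic (-1) := (hc₂.2.trans hc₁.2).le
  refine ⟨c₀, hc₀, c₁, hc₁, hfc₀, hfc₁,
    fun x hx => hn.eq_or_eq_of_pow_succ_add_pow_eq_one hc₀.1.le hc₁.2.le hfc₀ hfc₁ hx,
    c₂, hc₂, hfc₂, fun x hx hfx => ?_, fun x hx => ?_, fun y hy => ?_⟩
  · exact hanti.injOn (hx.2.trans hc₁.2).le hc₂' (hfx.trans hfc₂.symm)
  · exact hfc₂ ▸ hanti (hx.le.trans hc₂') hc₂' hx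
  · exact hfc₂ ▸ hanti hc₂' (mem_Iic.mpr hy.2.le) hy.1
end

section
/- For f(x) = x^{2m} with m ≥ 1, the secant-method ratio recurrence is k_n = h_{2m}(k_{n−1}) where h_{2m}(k) = (1 − k^{2m−1})/(1 − k^{2m}) (valid whenever k_{n−1} ∉ {−1, 1}), and the fixed points of h_{2m} are exactly the roots c_{2m,0} ∈ (0,1) and c_{2m,1} ∈ (−2,−1) of p_{2m}(k) = k^{2m} + k^{2m−1} − 1. In particular, if k_0 = c_{2m,1} and e_0 ≠ 0, then e_n = c_{2m,1}^n e_0 for all n and |e_n| → ∞. -/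
open Filter Topology

private lemma pow_ne_one_aux (k : ℝ) (n : ℕ) (hn : n ≠ 0) (h1 : k ≠ 1) (h2 : k ≠ -1) :
    k ^ n ≠ 1 := by
  rw [Ne, pow_eq_one_iff_of_ne_zero hn]
  tauto

private lemma den_ne_zero_aux (t : ℕ) (k e : ℝ) (h1 : k ≠ 1) (h2 : k ≠ -1) (he : e ≠ 0) :
    e ^ (t + 1) - (k * e) ^ (t + 1) ≠ 0 := by
  intro h
  have hk : k ^ (t + 1) ≠ 1 := pow_ne_one_aux k (t + 1) (Nat.succ_ne_zero t) h1 h2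
  have he' : e ^ (t + 1) ≠ 0 := pow_ne_zero _ he
  have h0 : e ^ (t + 1) * (1 - k ^ (t + 1)) = 0 := by linear_combination h
  rcases mul_eq_zero.mp h0 with h' | h'
  · exact he' h'
  · exact hk (by linarith)

private lemma step_aux (t : ℕ) (k e : ℝ) (h1 : k ≠ 1) (h2 : k ≠ -1) (he : e ≠ 0)
    (hfix : k ^ (t + 1) + k ^ t - 1 = 0) :
    (k * e) - (k * e) ^ (t + 1) * (e - k * e) / (e ^ (t + 1) - (k * e) ^ (t + 1)) =
      k * (k * e) := by
  have hden := den_ne_zero_aux t k e h1 h2 he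
  have hX : (k * e) ^ (t + 1) * (e - k * e) =
      (k * e - k * (k * e)) * (e ^ (t + 1) - (k * e) ^ (t + 1)) := by
    linear_combination (k * (e ^ (t + 1) * e) * (1 - k)) * hfix
  rw [hX, mul_div_assoc, div_self hden, mul_one]
  ring

theorem secant_x2m_ratio_and_divergence (m : ℕ) (hm : 1 ≤ m)
    (c1 : ℝ) (hc1 : c1 ∈ Set.Ioo (-2 : ℝ) (-1))
    (hc1root : c1 ^ (2 * m) + c1 ^ (2 * m - 1) - 1 = 0) :
    -- (a) ratio recurrence for the secant method applied to f(x) = x^(2m)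
    (∀ k eprev : ℝ, k ≠ -1 → k ≠ 1 → k ≠ 0 → eprev ≠ 0 →
      ((k * eprev) - (k * eprev) ^ (2 * m) * (eprev - k * eprev) /
          (eprev ^ (2 * m) - (k * eprev) ^ (2 * m))) / (k * eprev) =
        (1 - k ^ (2 * m - 1)) / (1 - k ^ (2 * m))) ∧
    -- (b) fixed points of h are exactly the roots of p
    (∀ k : ℝ, k ≠ -1 → k ≠ 1 →
      ((1 - k ^ (2 * m - 1)) / (1 - k ^ (2 * m)) = k ↔
        k ^ (2 * m) + k ^ (2 * m - 1) - 1 = 0)) ∧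
    -- (c) divergence when k₀ = c1
    (∀ e : ℕ → ℝ, (∀ n, e n ≠ 0) → e 1 = c1 * e 0 →
      (∀ n, e (n + 2) =
        e (n + 1) - (e (n + 1)) ^ (2 * m) * (e n - e (n + 1)) /
          ((e n) ^ (2 * m) - (e (n + 1)) ^ (2 * m))) →
      (∀ n, e n = c1 ^ n * e 0) ∧ Tendsto (fun n => |e n|) atTop atTop) := by
  obtain ⟨t, ht⟩ : ∃ t, 2 * m = t + 1 := ⟨2 * m - 1, by omega⟩
  have ht' : 2 * m - 1 = t := by omega
  rw [ht', ht] at hc1root ⊢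
  obtain ⟨hc1a, hc1b⟩ := hc1
  have hc1ne1 : c1 ≠ 1 := by linarith
  have hc1nem1 : c1 ≠ -1 := by linarith
  refine ⟨?_, ?_, ?_⟩
  · -- (a)
    intro k e hkm1 hk1 hk0 he0
    have hk : k ^ (t + 1) ≠ 1 := pow_ne_one_aux k (t + 1) (Nat.succ_ne_zero t) hk1 hkm1
    have hden := den_ne_zero_aux t k e hk1 hkm1 he0
    have hke : k * e ≠ 0 := mul_ne_zero hk0 he0
    have h1k : (1 : ℝ) - k ^ (t + 1) ≠ 0 := sub_ne_zero.mpr (Ne.symm hk)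
    field_simp
    ring
  · -- (b)
    intro k hkm1 hk1
    have hk : k ^ (t + 1) ≠ 1 := pow_ne_one_aux k (t + 1) (Nat.succ_ne_zero t) hk1 hkm1
    have h1k : (1 : ℝ) - k ^ (t + 1) ≠ 0 := sub_ne_zero.mpr (Ne.symm hk)
    rw [div_eq_iff h1k]
    constructor
    · intro h
      have hfac : (k - 1) * (k ^ (t + 1) + k ^ t - 1) = 0 := by linear_combination h
      rcases mul_eq_zero.mp hfac with h' | h'
      · exact absurd (by linarith : k = 1) hk1
      · linarith
    · intro h
      linear_combination (k - 1) * h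
  · -- (c)
    intro e he0 he1 hrec
    have key : ∀ n, e n = c1 ^ n * e 0 ∧ e (n + 1) = c1 ^ (n + 1) * e 0 := by
      intro n
      induction n with
      | zero => exact ⟨by rw [pow_zero, one_mul], by rw [pow_one]; exact he1⟩
      | succ n ih =>
        refine ⟨ih.2, ?_⟩
        have hen : e n ≠ 0 := he0 n
        have hstep : e (n + 1) = c1 * e n := by
          rw [ih.1, ih.2]; ring
        have hs := step_aux t c1 (e n) hc1ne1 hc1nem1 hen hc1root
        rw [hrec n, hstep, hs, ← hstep, ih.2]
        ring
    refine ⟨fun n => (key n).1, ?_⟩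
    have h1 : (1 : ℝ) < |c1| := by
      rw [abs_of_neg (by linarith : c1 < 0)]; linarith
    have he00 : (0 : ℝ) < |e 0| := abs_pos.mpr (he0 0)
    have hT := (tendsto_pow_atTop_atTop_of_one_lt h1).atTop_mul_const he00
    refine hT.congr fun n => ?_
    rw [(key n).1, abs_mul, abs_pow]
end

section
/- For m ≥ 1, let h_{2m}(k) = (1 − k^{2m−1})/(1 − k^{2m}) and c_{2m,2} the unique root of k^{2m}+k^{2m−1}−2 in [−2, c_{2m,1}). Then |h_{2m}'(k)| > 1 for all k in (c_{2m,2}, −1) (for m > 1 one even has |h_{2m}'(k)| > 1 + 1/(2^{2m}−1)²); consequently, any orbit of h_{2m} cannot remain in (c_{2m,2}, c_{2m,1}) ∪ (c_{2m,1}, −1) forever: there exists an index ℓ with k_ℓ outside this set. -/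
/-!
For `k = -s < -1` one has `|h'(k)| = N(s) / (s^(2m) - 1)^2` with
`N(s) = 2m s^(2m-1) + (2m-1) s^(2m-2) + s^(4m-2)`, and on `(c₂, -1)` the equation defining `c₂`
bounds `N(s) - (s^(2m) - 1)^2` below by `4m - 4`; hence `|h'| > 1 + (4m - 4)/(2^(2m) - 1)^2`
there. For `m ≥ 2` this rate exceeds `1`, so by the mean value theorem the distance of an orbit to
the fixed point `c₁` grows geometrically, which a bounded interval cannot accommodate. For `m = 1`
the rate degenerates (`|h'(c₂)| = 1` at `c₂ = -2`), but `h(k) = 1/(1 + k)` is a Möbius map and the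
ratio `(k - c₁)/(k - c₀)` is multiplied by `c₁/c₀`, of modulus `> 1`, at every step.
-/

open Set

noncomputable def hMap (m : ℕ) (t : ℝ) : ℝ := (1 - t ^ (2 * m - 1)) / (1 - t ^ (2 * m))

noncomputable def expansionRate (m : ℕ) : ℝ := 1 + (4 * m - 4) / (2 ^ (2 * m) - 1) ^ 2

lemma exists_orbit_notMem_of_expanding {X : Type*} {f : X → X} {g : X → ℝ} {S : Set X}
    {r C : ℝ} (hr : 1 < r) (hexp : ∀ x ∈ S, r * |g x| ≤ |g (f x)|)
    (hbdd : ∀ x ∈ S, |g x| ≤ C) {k : ℕ → X} (hk : ∀ n, k (n + 1) = f (k n))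
    (h0 : g (k 0) ≠ 0) : ∃ n, k n ∉ S := by
  by_contra! hS
  have hgrowth : ∀ n, r ^ n * |g (k 0)| ≤ |g (k n)| := by
    intro n
    induction n with
    | zero => simp
    | succ n ih =>
      calc r ^ (n + 1) * |g (k 0)| = r * (r ^ n * |g (k 0)|) := by ring
        _ ≤ r * |g (k n)| := by gcongr
        _ ≤ |g (k (n + 1))| := hk n ▸ hexp _ (hS n)
  obtain ⟨n, hn⟩ := pow_unbounded_of_one_lt (C / |g (k 0)|) hr
  rw [div_lt_iff₀ (abs_pos.2 h0)] at hn
  linarith [hgrowth n, hbdd _ (hS n)]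

section hMap

variable {m : ℕ}

lemma hMap_eq_self (hm : 1 ≤ m) {c : ℝ} (hc : c ≠ 0)
    (hroot : c ^ (2 * m) + c ^ (2 * m - 1) - 1 = 0) : hMap m c = c := by
  have hsucc : c ^ (2 * m) = c ^ (2 * m - 1) * c := by
    rw [← pow_succ]; congr 1; omega
  rw [hMap, show 1 - c ^ (2 * m - 1) = c ^ (2 * m - 1) * c by linarith,
    show 1 - c ^ (2 * m) = c ^ (2 * m - 1) by linarith]
  exact mul_div_cancel_left₀ _ (pow_ne_zero _ hc)

lemma hasDerivAt_hMap (hm : 1 ≤ m) {k : ℝ} (hk : 1 - k ^ (2 * m) ≠ 0) :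
    HasDerivAt (hMap m) ((2 * m * k ^ (2 * m - 1) - (2 * m - 1) * k ^ (2 * m - 2)
      - k ^ (4 * m - 2)) / (1 - k ^ (2 * m)) ^ 2) k := by
  have hnum : HasDerivAt (fun t : ℝ => 1 - t ^ (2 * m - 1))
      (-((2 * m - 1 : ℝ) * k ^ (2 * m - 2))) k := by
    have h := (hasDerivAt_pow (2 * m - 1) k).const_sub 1
    rw [show 2 * m - 1 - 1 = 2 * m - 2 by omega] at h
    refine h.congr_deriv ?_
    push_cast [Nat.cast_sub (show 1 ≤ 2 * m by omega)]; ring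
  have hden : HasDerivAt (fun t : ℝ => 1 - t ^ (2 * m)) (-((2 * m : ℝ) * k ^ (2 * m - 1))) k :=
    ((hasDerivAt_pow (2 * m) k).const_sub 1).congr_deriv (by push_cast; ring)
  refine (hnum.div hden hk).congr_deriv ?_
  congr 1
  have e1 : k ^ (2 * m - 2) * k ^ (2 * m) = k ^ (4 * m - 2) := by
    rw [← pow_add]; congr 1; omega
  have e2 : k ^ (2 * m - 1) * k ^ (2 * m - 1) = k ^ (4 * m - 2) := by
    rw [← pow_add]; congr 1; omega
  linear_combination (2 * (m : ℝ) - 1) * e1 - 2 * (m : ℝ) * e2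

lemma hasDerivAt_hMap_neg (hm : 1 ≤ m) {s : ℝ} (hs : 1 < s) :
    HasDerivAt (hMap m) (-((2 * m * s ^ (2 * m - 1) + (2 * m - 1) * s ^ (2 * m - 2)
      + s ^ (4 * m - 2)) / (s ^ (2 * m) - 1) ^ 2)) (-s) := by
  have hev : Even (2 * m) := ⟨m, by ring⟩
  have hodd : Odd (2 * m - 1) := ⟨m - 1, by omega⟩
  have hev2 : Even (2 * m - 2) := ⟨m - 1, by omega⟩
  have hev4 : Even (4 * m - 2) := ⟨2 * m - 1, by omega⟩
  have hpow : 1 < s ^ (2 * m) := one_lt_pow₀ hs (by omega)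
  convert hasDerivAt_hMap hm (k := -s) (by rw [hev.neg_pow]; linarith) using 1
  rw [hev.neg_pow, hodd.neg_pow, hev2.neg_pow, hev4.neg_pow, ← neg_div]
  congr 1 <;> ring

lemma differentiableAt_hMap (hm : 1 ≤ m) {k : ℝ} (hk : k < -1) :
    DifferentiableAt ℝ (hMap m) k := by
  simpa using (hasDerivAt_hMap_neg hm (s := -k) (by linarith)).differentiableAt

lemma pow_mul_sub_one_lt_two (hm : 1 ≤ m) {c s : ℝ}
    (hroot : c ^ (2 * m) + c ^ (2 * m - 1) - 2 = 0) (hs : 1 < s) (hsc : s < -c) :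
    s ^ (2 * m - 1) * (s - 1) < 2 := by
  have hroot' : (-c) ^ (2 * m - 1) * (-c - 1) = 2 := by
    have hsucc : (-c) ^ (2 * m) = (-c) ^ (2 * m - 1) * -c := by
      rw [← pow_succ]; congr 1; omega
    rw [Even.neg_pow ⟨m, by ring⟩] at hsucc
    rw [Odd.neg_pow ⟨m - 1, by omega⟩] at hsucc ⊢
    linear_combination hroot - hsucc
  rw [← hroot']
  exact mul_lt_mul'' (pow_lt_pow_left₀ hsc (by linarith) (by omega)) (by linarith)
    (by positivity) (by linarith)

/-- Writing `A = s^(2m-1)`, the hypothesis gives `A²(s² - 1) < 2A(s + 1)`, after which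
the difference is at least `(2m - 2) A + (2m - 1) s^(2m-2) - 1`. -/
lemma four_mul_sub_four_lt (hm : 1 ≤ m) {s : ℝ} (hs : 1 < s)
    (h2 : s ^ (2 * m - 1) * (s - 1) < 2) :
    4 * (m : ℝ) - 4 < 2 * m * s ^ (2 * m - 1) + (2 * m - 1) * s ^ (2 * m - 2)
      + s ^ (4 * m - 2) - (s ^ (2 * m) - 1) ^ 2 := by
  set A := s ^ (2 * m - 1) with hA
  have hsucc : s ^ (2 * m) = A * s := by rw [hA, ← pow_succ]; congr 1; omega
  have hsq : s ^ (4 * m - 2) = A ^ 2 := by rw [hA, ← pow_mul]; congr 1; omega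
  have hA1 : 1 < A := one_lt_pow₀ hs (by omega)
  have hB1 : 1 ≤ s ^ (2 * m - 2) := one_le_pow₀ hs.le
  have hm1 : (1 : ℝ) ≤ m := by exact_mod_cast hm
  have hkey : 0 < (2 - A * (s - 1)) * (A * (s + 1)) := mul_pos (by linarith) (by positivity)
  rw [hsucc, hsq]
  nlinarith [mul_nonneg (sub_nonneg.2 hm1) (sub_nonneg.2 hA1.le),
    mul_nonneg (show (0 : ℝ) ≤ 2 * m - 1 by linarith) (sub_nonneg.2 hB1)]

lemma expansionRate_lt (hm : 1 ≤ m) {s : ℝ} (hs : 1 < s) (hs2 : s < 2)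
    (h2 : s ^ (2 * m - 1) * (s - 1) < 2) :
    expansionRate m < (2 * m * s ^ (2 * m - 1) + (2 * m - 1) * s ^ (2 * m - 2)
      + s ^ (4 * m - 2)) / (s ^ (2 * m) - 1) ^ 2 := by
  have hnum := four_mul_sub_four_lt hm hs h2
  have hP : 0 < s ^ (2 * m) - 1 := by linarith [one_lt_pow₀ hs (show 2 * m ≠ 0 by omega)]
  have hPQ : s ^ (2 * m) - 1 < 2 ^ (2 * m) - 1 := by
    linarith [pow_lt_pow_left₀ hs2 (by linarith) (show 2 * m ≠ 0 by omega)]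
  have hm1 : (1 : ℝ) ≤ m := by exact_mod_cast hm
  rw [expansionRate, lt_div_iff₀ (by positivity)]
  calc (1 + (4 * m - 4) / (2 ^ (2 * m) - 1) ^ 2) * (s ^ (2 * m) - 1) ^ 2
      ≤ (1 + (4 * m - 4) / (s ^ (2 * m) - 1) ^ 2) * (s ^ (2 * m) - 1) ^ 2 := by
        gcongr
        linarith
    _ = (s ^ (2 * m) - 1) ^ 2 + (4 * m - 4) := by field_simp
    _ < _ := by linarith

lemma deriv_hMap_lt (hm : 1 ≤ m) {c : ℝ} (hc : -2 ≤ c)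
    (hroot : c ^ (2 * m) + c ^ (2 * m - 1) - 2 = 0) {k : ℝ} (hk : k ∈ Ioo c (-1)) :
    deriv (hMap m) k < -expansionRate m := by
  have hs : 1 < -k := by linarith [hk.2]
  rw [← neg_neg k, (hasDerivAt_hMap_neg hm hs).deriv, neg_lt_neg_iff]
  exact expansionRate_lt hm hs (by linarith [hk.1])
    (pow_mul_sub_one_lt_two hm hroot hs (by linarith [hk.1]))

lemma expansionRate_mul_sub_le (hm : 1 ≤ m) {c : ℝ} (hc : -2 ≤ c)
    (hroot : c ^ (2 * m) + c ^ (2 * m - 1) - 2 = 0) {x y : ℝ} (hx : x ∈ Ioo c (-1))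
    (hy : y ∈ Ioo c (-1)) (hxy : x ≤ y) :
    expansionRate m * (y - x) ≤ hMap m x - hMap m y := by
  have hdiff : ∀ t ∈ Ioo c (-1), DifferentiableAt ℝ (hMap m) t :=
    fun t ht => differentiableAt_hMap hm ht.2
  have h := (convex_Ioo c (-1)).image_sub_le_mul_sub_of_deriv_le
    (fun t ht => (hdiff t ht).continuousAt.continuousWithinAt)
    (fun t ht => (hdiff t (interior_subset ht)).differentiableWithinAt)
    (fun t ht => (deriv_hMap_lt hm hc hroot (interior_subset ht)).le) x hx y hy hxy
  linarith

lemma expansionRate_mul_abs_sub_le (hm : 1 ≤ m) {c c₁ : ℝ} (hc : -2 ≤ c)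
    (hroot : c ^ (2 * m) + c ^ (2 * m - 1) - 2 = 0) (hc₁ : c₁ ∈ Ioo c (-1))
    (hroot₁ : c₁ ^ (2 * m) + c₁ ^ (2 * m - 1) - 1 = 0) {x : ℝ} (hx : x ∈ Ioo c (-1)) :
    expansionRate m * |x - c₁| ≤ |hMap m x - c₁| := by
  have hfix : hMap m c₁ = c₁ := hMap_eq_self hm (by linarith [hc₁.2]) hroot₁
  rcases le_total x c₁ with hxc | hxc
  · have h := expansionRate_mul_sub_le hm hc hroot hx hc₁ hxc
    rw [hfix] at h
    rw [abs_of_nonpos (by linarith), neg_sub]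
    exact h.trans (le_abs_self _)
  · have h := expansionRate_mul_sub_le hm hc hroot hc₁ hx hxc
    rw [hfix] at h
    rw [abs_of_nonneg (by linarith)]
    exact h.trans (abs_sub_comm (hMap m x) c₁ ▸ le_abs_self _)

lemma one_le_expansionRate (hm : 1 ≤ m) : 1 ≤ expansionRate m := by
  have hm1 : (1 : ℝ) ≤ m := by exact_mod_cast hm
  unfold expansionRate
  have : 0 ≤ (4 * (m : ℝ) - 4) / (2 ^ (2 * m) - 1) ^ 2 := by
    apply div_nonneg <;> [linarith; positivity]
  linarith

lemma one_add_inv_lt_expansionRate (hm : 2 ≤ m) :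
    1 + 1 / ((2 : ℝ) ^ (2 * m) - 1) ^ 2 < expansionRate m := by
  have hm2 : (2 : ℝ) ≤ m := by exact_mod_cast hm
  have hQ : 1 < (2 : ℝ) ^ (2 * m) := one_lt_pow₀ one_lt_two (by omega)
  unfold expansionRate
  gcongr
  · nlinarith

lemma one_lt_expansionRate (hm : 2 ≤ m) : 1 < expansionRate m := by
  have hQ : 1 < (2 : ℝ) ^ (2 * m) := one_lt_pow₀ one_lt_two (by omega)
  refine lt_trans ?_ (one_add_inv_lt_expansionRate hm)
  have : 0 < 1 / ((2 : ℝ) ^ (2 * m) - 1) ^ 2 := by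
    apply div_pos one_pos; nlinarith
  linarith

lemma exists_orbit_hMap_notMem (hm : 2 ≤ m) {c c₁ : ℝ} (hc : -2 ≤ c)
    (hroot : c ^ (2 * m) + c ^ (2 * m - 1) - 2 = 0) (hc₁ : c₁ ∈ Ioo c (-1))
    (hroot₁ : c₁ ^ (2 * m) + c₁ ^ (2 * m - 1) - 1 = 0) {S : Set ℝ} (hS : S ⊆ Ioo c (-1))
    {k : ℕ → ℝ} (hk : ∀ n, k (n + 1) = hMap m (k n)) (hk₀ : k 0 ≠ c₁) : ∃ n, k n ∉ S := by
  refine exists_orbit_notMem_of_expanding (g := fun x => x - c₁) (C := 1)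
    (one_lt_expansionRate hm)
    (fun x hx => expansionRate_mul_abs_sub_le (by omega) hc hroot hc₁ hroot₁ (hS hx))
    (fun x hx => ?_) hk (sub_ne_zero.2 hk₀)
  have hx' := hS hx
  exact abs_le.2 ⟨by linarith [hx'.1, hc₁.2], by linarith [hx'.2, hc₁.1]⟩

end hMap

lemma hMap_one_apply {x : ℝ} (hx : x ≠ 1) : hMap 1 x = (1 + x)⁻¹ := by
  rw [hMap, show (1 : ℝ) - x ^ (2 * 1) = (1 - x) * (1 + x) by ring, pow_one,
    div_mul_cancel_left₀ (sub_ne_zero.2 hx.symm)]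

/-- `x ↦ (x - c₁) / (x - c₀)` conjugates `x ↦ (1 + x)⁻¹`, whose fixed points are `c₀` and `c₁`,
to multiplication by `c₁ / c₀`. -/
lemma inv_one_add_sub_div_sub {c₀ c₁ x : ℝ} (hc₀ : c₀ ^ 2 + c₀ - 1 = 0)
    (hc₁ : c₁ ^ 2 + c₁ - 1 = 0) (hc₀ne : c₀ ≠ 0) (hx : 1 + x ≠ 0) (hxc₀ : x ≠ c₀) :
    ((1 + x)⁻¹ - c₁) / ((1 + x)⁻¹ - c₀) = c₁ / c₀ * ((x - c₁) / (x - c₀)) := by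
  have key : ∀ c : ℝ, c ^ 2 + c - 1 = 0 → (1 + x)⁻¹ - c = c * (c - x) / (1 + x) := by
    intro c hc
    field_simp
    linear_combination -hc
  rw [key c₁ hc₁, key c₀ hc₀, div_div_div_cancel_right₀ hx]
  field_simp [sub_ne_zero.2 hxc₀, sub_ne_zero.2 hxc₀.symm]
  ring

lemma exists_orbit_hMap_one_notMem {c₀ c₁ : ℝ} (hc₀ : c₀ ∈ Ioo 0 1)
    (hroot₀ : c₀ ^ 2 + c₀ - 1 = 0) (hc₁ : c₁ ∈ Ioo (-2) (-1)) (hroot₁ : c₁ ^ 2 + c₁ - 1 = 0)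
    {S : Set ℝ} (hS : S ⊆ Ioo (-2) (-1)) {k : ℕ → ℝ} (hk : ∀ n, k (n + 1) = hMap 1 (k n))
    (hk₀ : k 0 ≠ c₀) (hk₁ : k 0 ≠ c₁) : ∃ n, k n ∉ S := by
  obtain ⟨hc₀0, hc₀1⟩ := hc₀
  refine exists_orbit_notMem_of_expanding (g := fun x => (x - c₁) / (x - c₀))
    (r := |c₁ / c₀|) (C := 1) ?_ ?_ ?_ hk (div_ne_zero (sub_ne_zero.2 hk₁) (sub_ne_zero.2 hk₀))
  · rw [abs_div, abs_of_pos hc₀0, one_lt_div hc₀0]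
    linarith [abs_of_neg (hc₁.2.trans neg_one_lt_zero), hc₁.2]
  · intro x hx
    have hx1 := (hS hx).2
    rw [hMap_one_apply (by linarith), inv_one_add_sub_div_sub hroot₀ hroot₁ hc₀0.ne'
      (by linarith) (by linarith), abs_mul]
  · intro x hx
    obtain ⟨hx2, hx1⟩ := hS hx
    rw [abs_div, div_le_one (abs_pos.2 (by linarith)), abs_of_neg (show x - c₀ < 0 by linarith),
      abs_le]
    constructor <;> linarith [hc₁.1, hc₁.2]

theorem h2m_expanding_orbit_escapes (m : ℕ) (hm : 1 ≤ m)
    (c0 : ℝ) (hc0 : c0 ∈ Set.Ioo (0 : ℝ) 1)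
    (hc0root : c0 ^ (2 * m) + c0 ^ (2 * m - 1) - 1 = 0)
    (c1 : ℝ) (hc1 : c1 ∈ Set.Ioo (-2 : ℝ) (-1))
    (hc1root : c1 ^ (2 * m) + c1 ^ (2 * m - 1) - 1 = 0)
    (c2 : ℝ) (hc2 : c2 ∈ Set.Ico (-2 : ℝ) c1)
    (hc2root : c2 ^ (2 * m) + c2 ^ (2 * m - 1) - 2 = 0) :
    (∀ k ∈ Set.Ioo c2 (-1 : ℝ),
      1 < |deriv (fun t : ℝ => (1 - t ^ (2 * m - 1)) / (1 - t ^ (2 * m))) k|) ∧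
    (1 < m → ∀ k ∈ Set.Ioo c2 (-1 : ℝ),
      1 + 1 / ((2 : ℝ) ^ (2 * m) - 1) ^ 2 <
        |deriv (fun t : ℝ => (1 - t ^ (2 * m - 1)) / (1 - t ^ (2 * m))) k|) ∧
    (∀ k : ℕ → ℝ,
      (∀ n, k (n + 1) = (1 - (k n) ^ (2 * m - 1)) / (1 - (k n) ^ (2 * m))) →
      k 0 ≠ c0 → k 0 ≠ c1 →
      ∃ ℓ : ℕ, k ℓ ∉ Set.Ioo c2 c1 ∪ Set.Ioo c1 (-1 : ℝ)) := by
  have hderiv : ∀ k ∈ Ioo c2 (-1), expansionRate m < |deriv (hMap m) k| := fun k hk =>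
    lt_abs.2 (Or.inr (lt_neg.1 (deriv_hMap_lt hm hc2.1 hc2root hk)))
  refine ⟨fun k hk => (one_le_expansionRate hm).trans_lt (hderiv k hk),
    fun hm2 k hk => (one_add_inv_lt_expansionRate hm2).trans (hderiv k hk), ?_⟩
  intro k hk hk0c0 hk0c1
  have hS : Ioo c2 c1 ∪ Ioo c1 (-1) ⊆ Ioo c2 (-1) :=
    union_subset (Ioo_subset_Ioo_right hc1.2.le) (Ioo_subset_Ioo_left hc2.2.le)
  rcases hm.eq_or_lt with rfl | hm2
  · exact exists_orbit_hMap_one_notMem hc0 (by simpa using hc0root) hc1 (by simpa using hc1root)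
      (hS.trans (Ioo_subset_Ioo_left hc2.1)) hk hk0c0 hk0c1
  · exact exists_orbit_hMap_notMem hm2 hc2.1 hc2root ⟨hc2.2, hc1.2⟩ hc1root hS hk hk0c1
end
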